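/- arXiv:1412.1143 — 7 statements merged into one kernel-verified Lean document; each statement's English description precedes it below -/
import Mathlib

section
/- Let v_1,...,v_m ∈ ℝ^d be vectors such that {v_1,...,v_m} contains k pairwise disjoint bases (k ≥ 1). Then for every η > 0 there exists a strongly Rayleigh probability distribution μ on subsets of [m] supported on the bases (i.e. μ(S) > 0 implies S is a basis) such that the marginal probability of each element i ∈ [m] under μ is at most 1/k + η. -/
/-!
Let `V` be the `d × m` matrix with columns `v_i`. The weights `c S = (det V_S)²` are supported on
the bases, and by Cauchy–Binet their generating polynomial is `det (∑ i, z_i v_i v_iᵀ)`. It is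
real stable: a null vector `x` of this matrix gives `∑ i, Im z_i |⟪v_i, x⟫|² = 0`, impossible
when all `Im z_i > 0` and the `v_i` span. Real stability survives the exponential tilt
`c S ↦ c S * exp (∑ j ∈ S, γ j)`, and the marginals of the tilted distribution are the partial
derivatives of `log Z`, where `Z γ = ∑ S, c S * exp (∑ j ∈ S, γ j)`. Each of the `k` disjoint
bases `T_a` gives `log Z γ ≥ log (c T_a) + ∑ j ∈ T_a, γ j`; averaging over `a` shows that
`log Z γ - ∑ j, x j * γ j` is bounded below, where `x j ≤ 1/k` is the fraction of the bases
containing `j`. A continuous function that is bounded below has a point where all its partial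
derivatives are at most `η` in absolute value (a minimum of it plus `η ∑ j, √(1 + γ j ²)`), and
there every marginal is at most `x i + η ≤ 1/k + η`.
-/

noncomputable section

/-- A polynomial `p ∈ ℝ[z_1,...,z_m]` is real stable if it has no root
`(z_1,...,z_m) ∈ ℂ^m` with `Im(z_i) > 0` for every `i`. -/
def RealStable {m : ℕ} (p : MvPolynomial (Fin m) ℝ) : Prop :=
  ∀ z : Fin m → ℂ, (∀ i, 0 < (z i).im) → (MvPolynomial.aeval z) p ≠ 0

/-- The generating polynomial of a distribution on subsets of `[m]`. -/
def genPoly {m : ℕ} (μ : Finset (Fin m) → ℝ) : MvPolynomial (Fin m) ℝ :=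
  ∑ S : Finset (Fin m), MvPolynomial.C (μ S) * ∏ i ∈ S, MvPolynomial.X i

/-- `T ⊆ [m]` is a basis for the vectors `v_1,...,v_m ∈ ℝ^d` if `|T| = d` and the vectors
`{v_i : i ∈ T}` are linearly independent. -/
def IsBasisSet {m d : ℕ} (v : Fin m → Fin d → ℝ) (T : Finset (Fin m)) : Prop :=
  T.card = d ∧ LinearIndependent ℝ (fun i : T => v i)

open Finset Matrix Filter Topology Real

theorem sum_filter_image_eq_sum_perm {ι M : Type*} [Fintype ι] [LinearOrder ι]
    [AddCommMonoid M] {d : ℕ} (S : Finset ι) (h : S.card = d) (F : (Fin d → ι) → M) :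
    ∑ r : Fin d → ι with univ.image r = S, F r =
      ∑ σ : Equiv.Perm (Fin d), F (S.orderEmbOfFin h ∘ σ) := by
  symm
  refine sum_nbij' (fun σ => S.orderEmbOfFin h ∘ σ) (fun r => (Tuple.sort r)⁻¹)
    ?_ (fun _ _ => mem_univ _) ?_ ?_ (fun _ _ => rfl)
  · intro σ _
    simp [← image_image, image_univ_equiv]
  · intro σ _
    rw [inv_eq_iff_eq_inv, eq_comm, Tuple.eq_sort_iff]
    refine ⟨?_, fun p q hpq hpq' => absurd (by simpa using hpq') hpq.ne⟩
    simpa [Function.comp_def] using (S.orderEmbOfFin h).monotone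
  · intro r hr
    replace hr : univ.image r = S := by simpa using hr
    have hinj : Function.Injective r := by
      rw [← Set.injOn_univ, ← coe_univ, ← card_image_iff, hr, h, card_univ, Fintype.card_fin]
    have hsorted : r ∘ Tuple.sort r = S.orderEmbOfFin h :=
      orderEmbOfFin_unique h (fun p => hr ▸ mem_image_of_mem _ (mem_univ _))
        ((Tuple.monotone_sort r).strictMono_of_injective (hinj.comp (Tuple.sort r).injective))
    funext p
    simp [← hsorted]

namespace Matrix

variable {R : Type*} [CommRing R] {ι : Type*}

theorem det_mul_eq_sum_prod_mul_det_submatrix [Fintype ι] {n : Type*} [Fintype n]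
    [DecidableEq n] (A : Matrix n ι R) (B : Matrix ι n R) :
    (A * B).det = ∑ r : n → ι, (∏ p, A p (r p)) * (B.submatrix r id).det := by
  have hrows : (A * B).det =
      (detRowAlternating (R := R) (n := n)).toMultilinearMap fun p => ∑ i, A p i • B i := by
    congr 1
    ext p q
    simp [mul_apply]
  rw [hrows, MultilinearMap.map_sum]
  refine sum_congr rfl fun r _ => ?_
  rw [MultilinearMap.map_smul_univ, smul_eq_mul]
  rfl

variable [LinearOrder ι] {d : ℕ}

/-- The minor of `A` on the columns in `S`, taken in increasing order; `0` unless `#S = d`. -/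
def colMinor (A : Matrix (Fin d) ι R) (S : Finset ι) : R :=
  if h : S.card = d then (A.submatrix id (S.orderEmbOfFin h)).det else 0

theorem colMinor_map {R' : Type*} [CommRing R'] (f : R →+* R') (A : Matrix (Fin d) ι R)
    (S : Finset ι) : colMinor (A.map f) S = f (colMinor A S) := by
  unfold colMinor
  split_ifs
  · rw [RingHom.map_det]
    rfl
  · rw [map_zero]

section Field

variable {K : Type*} [Field K]

theorem colMinor_ne_zero_iff (A : Matrix (Fin d) ι K) (S : Finset ι) :
    colMinor A S ≠ 0 ↔ S.card = d ∧ LinearIndependent K (fun i : S => Aᵀ i) := by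
  unfold colMinor
  split_ifs with h
  · rw [← isUnit_iff_ne_zero, ← isUnit_iff_isUnit_det, ← linearIndependent_cols_iff_isUnit,
      ← linearIndependent_equiv (S.orderIsoOfFin h).toEquiv, and_iff_right h]
    rfl
  · simp [h]

theorem linearIndependent_of_colMinor_ne_zero {A : Matrix (Fin d) ι K} {S : Finset ι}
    (hS : colMinor A S ≠ 0) : LinearIndependent K A := by
  unfold colMinor at hS
  split_ifs at hS with h
  · have hrows := linearIndependent_rows_iff_isUnit.2
      ((isUnit_iff_isUnit_det _).2 (isUnit_iff_ne_zero.2 hS))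
    exact hrows.of_comp (LinearMap.funLeft K K (S.orderEmbOfFin h))
  · exact absurd rfl hS

end Field

variable [Fintype ι]

theorem det_mul_eq_sum_colMinor_mul_colMinor (A : Matrix (Fin d) ι R) (B : Matrix ι (Fin d) R) :
    (A * B).det = ∑ S : Finset ι, colMinor A S * colMinor Bᵀ S := by
  classical
  rw [det_mul_eq_sum_prod_mul_det_submatrix, ← sum_fiberwise (g := fun r => univ.image r)]
  refine sum_congr rfl fun S _ => ?_
  by_cases h : S.card = d
  · set e := S.orderEmbOfFin h
    rw [sum_filter_image_eq_sum_perm S h, colMinor, colMinor, dif_pos h, dif_pos h,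
      ← transpose_submatrix, det_transpose, ← det_transpose (A.submatrix id e), det_apply',
      sum_mul]
    refine sum_congr rfl fun σ _ => ?_
    rw [show B.submatrix (e ∘ σ) id = (B.submatrix e id).submatrix σ id from rfl, det_permute]
    simp only [transpose_apply, submatrix_apply, id, Function.comp_apply]
    ring
  · rw [colMinor, dif_neg h, zero_mul]
    refine sum_eq_zero fun r hr => ?_
    have hr : ¬ Function.Injective r := fun hinj => h <| by
      rw [← (mem_filter.1 hr).2, card_image_of_injective _ hinj, card_univ, Fintype.card_fin]
    obtain ⟨p, q, hpq, hne⟩ := Function.not_injective_iff.1 hr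
    rw [det_zero_of_row_eq hne (by ext; simp [hpq]), mul_zero]

theorem colMinor_mul_diagonal [DecidableEq ι] (A : Matrix (Fin d) ι R) (w : ι → R)
    (S : Finset ι) : colMinor (A * diagonal w) S = (∏ i ∈ S, w i) * colMinor A S := by
  unfold colMinor
  split_ifs with h
  · set e := S.orderEmbOfFin h
    have hsub : (A * diagonal w).submatrix id e = A.submatrix id e * diagonal (w ∘ e) := by
      ext p q
      simp [mul_apply, diagonal, sum_ite_eq']
    rw [hsub, det_mul, det_diagonal, mul_comm]
    conv_rhs => rw [← map_orderEmbOfFin_univ S h, prod_map]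
    rfl
  · rw [mul_zero]

end Matrix

theorem det_map_mul_diagonal_mul_transpose_ne_zero {n ι : Type*} [Fintype n] [DecidableEq n]
    [Fintype ι] [DecidableEq ι] (A : Matrix n ι ℝ)
    (hA : LinearIndependent ℂ (A.map ((↑) : ℝ → ℂ))) {w : ι → ℂ} (hw : ∀ i, 0 < (w i).im) :
    (A.map ((↑) : ℝ → ℂ) * diagonal w * (A.map ((↑) : ℝ → ℂ))ᵀ).det ≠ 0 := by
  set Ac := A.map ((↑) : ℝ → ℂ)
  intro hdet
  obtain ⟨x, hx0, hx⟩ := exists_mulVec_eq_zero_iff.2 hdet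
  set y := x ᵥ* Ac
  have hstar : star x ᵥ* Ac = star y := by
    ext i
    simp [y, Ac, vecMul, dotProduct, mul_comm]
  have hquad : star y ⬝ᵥ (diagonal w *ᵥ y) = 0 := by
    rw [← hstar, ← dotProduct_mulVec, mulVec_mulVec, show y = Acᵀ *ᵥ x from
      (mulVec_transpose Ac x).symm, mulVec_mulVec, hx, dotProduct_zero]
  have him : ∑ i, (w i).im * Complex.normSq (y i) = 0 := by
    have h := congrArg Complex.im hquad
    simp only [dotProduct, mulVec_diagonal, Complex.im_sum, Pi.star_apply,
      Complex.zero_im] at h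
    rw [← h]
    refine sum_congr rfl fun i _ => ?_
    rw [mul_left_comm, Complex.star_def, ← Complex.normSq_eq_conj_mul_self,
      Complex.im_mul_ofReal]
  have hy : y = 0 := by
    ext i
    have hi := (sum_eq_zero_iff_of_nonneg fun j _ =>
      mul_nonneg (hw j).le (Complex.normSq_nonneg (y j))).1 him i (mem_univ i)
    exact Complex.normSq_eq_zero.1 ((mul_eq_zero.1 hi).resolve_left (hw i).ne')
  exact hx0 (funext (Fintype.linearIndependent_iff.1 hA x (by rw [← vecMul_eq_sum]; exact hy)))

theorem hasDerivAt_sqrt_one_add_sq (s : ℝ) :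
    HasDerivAt (fun s : ℝ => √(1 + s ^ 2)) (s / √(1 + s ^ 2)) s := by
  have h := ((hasDerivAt_pow 2 s).const_add 1).sqrt (by positivity : 1 + s ^ 2 ≠ 0)
  convert h using 1
  field_simp
  ring

theorem abs_le_sqrt_one_add_sq (s : ℝ) : |s| ≤ √(1 + s ^ 2) := by
  rw [← sqrt_sq_eq_abs]
  exact sqrt_le_sqrt (by linarith)

theorem exists_forall_abs_lineDeriv_single_le {ι : Type*} [Fintype ι] [DecidableEq ι]
    {f : (ι → ℝ) → ℝ} (hf : Continuous f) (hbdd : BddBelow (Set.range f)) {η : ℝ}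
    (hη : 0 < η) : ∃ γ, ∀ i, |lineDeriv ℝ f γ (Pi.single i 1)| ≤ η := by
  obtain ⟨B, hB⟩ := hbdd
  -- a coercive penalty whose partial derivatives lie in `[-1, 1]`
  set P : (ι → ℝ) → ℝ := fun γ => ∑ j, √(1 + γ j ^ 2)
  have hnorm_le : ∀ γ, ‖γ‖ ≤ P γ := fun γ =>
    (pi_norm_le_iff_of_nonneg (by positivity)).2 fun i =>
      (abs_le_sqrt_one_add_sq (γ i)).trans
        (single_le_sum (f := fun j => √(1 + γ j ^ 2)) (fun _ _ => by positivity) (mem_univ i))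
  have hcont : Continuous fun γ => f γ + η * P γ := by fun_prop
  have hcoer : Tendsto (fun γ => f γ + η * P γ) (cocompact _) atTop :=
    tendsto_atTop_mono (fun γ => add_le_add (hB ⟨γ, rfl⟩)
      (mul_le_mul_of_nonneg_left (hnorm_le γ) hη.le))
      (tendsto_atTop_add_const_left _ B (tendsto_norm_cocompact_atTop.const_mul_atTop hη))
  obtain ⟨γ, hγ⟩ := hcont.exists_forall_le hcoer
  refine ⟨γ, fun i => ?_⟩
  by_cases hdiff : LineDifferentiableAt ℝ f γ (Pi.single i 1)
  swap
  · rw [lineDeriv_zero_of_not_lineDifferentiableAt hdiff, abs_zero]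
    exact hη.le
  have hPderiv : HasLineDerivAt ℝ P (γ i / √(1 + γ i ^ 2)) γ (Pi.single i 1) := by
    have hP : HasFDerivAt P (∑ j, (γ j / √(1 + γ j ^ 2)) • ContinuousLinearMap.proj j) γ :=
      HasFDerivAt.fun_sum fun j _ => by
        exact (hasDerivAt_sqrt_one_add_sq (γ j)).comp_hasFDerivAt γ
          (ContinuousLinearMap.proj (R := ℝ) (φ := fun _ : ι => ℝ) j).hasFDerivAt
    simpa [Pi.single_apply] using hP.hasLineDerivAt (Pi.single i 1)
  have hmin : IsLocalMin
      (fun t : ℝ => f (γ + t • Pi.single i 1) + η * P (γ + t • Pi.single i 1)) 0 :=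
    Eventually.of_forall fun t => by simpa using hγ _
  have hcrit := hmin.hasDerivAt_eq_zero (hdiff.hasLineDerivAt.add (hPderiv.const_mul η))
  rw [show lineDeriv ℝ f γ (Pi.single i 1) = -(η * (γ i / √(1 + γ i ^ 2))) by linarith,
    abs_neg, abs_mul, abs_of_pos hη, abs_div, abs_of_pos (by positivity : 0 < √(1 + γ i ^ 2))]
  exact mul_le_of_le_one_right hη.le
    (div_le_one_of_le₀ (abs_le_sqrt_one_add_sq _) (by positivity))

section ExpTilt

variable {ι : Type*}

def expTilt (c : Finset ι → ℝ) (γ : ι → ℝ) (S : Finset ι) : ℝ := c S * rexp (∑ j ∈ S, γ j)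

variable {c : Finset ι → ℝ}

theorem expTilt_nonneg (hc : ∀ S, 0 ≤ c S) (γ : ι → ℝ) (S : Finset ι) : 0 ≤ expTilt c γ S :=
  mul_nonneg (hc S) (exp_pos _).le

variable [Fintype ι]

theorem log_add_sum_le_log_sum_expTilt (hc : ∀ S, 0 ≤ c S) {S : Finset ι} (hS : 0 < c S)
    (γ : ι → ℝ) : log (c S) + ∑ j ∈ S, γ j ≤ log (∑ T, expTilt c γ T) := by
  rw [← log_exp (∑ j ∈ S, γ j), ← log_mul hS.ne' (exp_pos _).ne']
  exact log_le_log (mul_pos hS (exp_pos _))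
    (single_le_sum (fun T _ => expTilt_nonneg hc γ T) (mem_univ S))

theorem sum_expTilt_pos (hc : ∀ S, 0 ≤ c S) {S : Finset ι} (hS : 0 < c S) (γ : ι → ℝ) :
    0 < ∑ T, expTilt c γ T :=
  (mul_pos hS (exp_pos _)).trans_le
    (single_le_sum (fun T _ => expTilt_nonneg hc γ T) (mem_univ S))

theorem hasLineDerivAt_log_sum_expTilt [DecidableEq ι] (c : Finset ι → ℝ) {γ : ι → ℝ}
    (hγ : ∑ S, expTilt c γ S ≠ 0) (i : ι) :
    HasLineDerivAt ℝ (fun γ => log (∑ S, expTilt c γ S))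
      ((∑ S with i ∈ S, expTilt c γ S) / ∑ S, expTilt c γ S) γ (Pi.single i 1) := by
  have hsum : ∀ S : Finset ι, HasFDerivAt (fun γ : ι → ℝ => ∑ j ∈ S, γ j)
      (∑ j ∈ S, ContinuousLinearMap.proj j) γ := fun S =>
    HasFDerivAt.fun_sum fun j _ => hasFDerivAt_apply (𝕜 := ℝ) (F' := fun _ => ℝ) j γ
  have hZ := HasFDerivAt.fun_sum (u := univ) fun S _ => ((hsum S).exp).const_mul (c S)
  have hval : ((∑ S, expTilt c γ S)⁻¹ • ∑ S, c S • rexp (∑ j ∈ S, γ j) •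
      ∑ j ∈ S, ContinuousLinearMap.proj (R := ℝ) (φ := fun _ : ι => ℝ) j) (Pi.single i 1)
      = (∑ S with i ∈ S, expTilt c γ S) / ∑ S, expTilt c γ S := by
    simp [expTilt, sum_filter, Pi.single_apply, div_eq_inv_mul]
  rw [← hval]
  exact (hZ.log hγ).hasLineDerivAt (Pi.single i 1)

theorem exists_sum_expTilt_filter_div_le [DecidableEq ι] (hc : ∀ S, 0 ≤ c S)
    {S₀ : Finset ι} (hS₀ : 0 < c S₀) (x : ι → ℝ)
    (hbdd : BddBelow (Set.range fun γ => log (∑ S, expTilt c γ S) - ∑ j, x j * γ j))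
    {η : ℝ} (hη : 0 < η) :
    ∃ γ, ∀ i, (∑ S with i ∈ S, expTilt c γ S) / ∑ S, expTilt c γ S ≤ x i + η := by
  have hcont : Continuous fun γ => log (∑ S, expTilt c γ S) - ∑ j, x j * γ j :=
    (Continuous.log (by unfold expTilt; fun_prop) fun γ => (sum_expTilt_pos hc hS₀ γ).ne').sub
      (by fun_prop)
  obtain ⟨γ, hγ⟩ := exists_forall_abs_lineDeriv_single_le hcont hbdd hη
  refine ⟨γ, fun i => ?_⟩
  have hlin : HasLineDerivAt ℝ (fun γ : ι → ℝ => ∑ j, x j * γ j) (x i) γ (Pi.single i 1) := by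
    simpa [Pi.single_apply] using (HasFDerivAt.fun_sum (u := univ) fun j _ =>
      (hasFDerivAt_apply (𝕜 := ℝ) (F' := fun _ => ℝ) j γ).const_mul (x j)).hasLineDerivAt
        (Pi.single i 1)
  have hderiv : HasLineDerivAt ℝ (fun γ => log (∑ S, expTilt c γ S) - ∑ j, x j * γ j)
      ((∑ S with i ∈ S, expTilt c γ S) / ∑ S, expTilt c γ S - x i) γ (Pi.single i 1) :=
    (hasLineDerivAt_log_sum_expTilt c (sum_expTilt_pos hc hS₀ γ).ne' i).sub hlin
  have hsmall := hγ i
  rw [hderiv.lineDeriv] at hsmall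
  linarith [le_abs_self ((∑ S with i ∈ S, expTilt c γ S) / ∑ S, expTilt c γ S - x i)]

theorem bddBelow_log_sum_expTilt_sub [DecidableEq ι] {κ : Type*} [Fintype κ] [Nonempty κ]
    (hc : ∀ S, 0 ≤ c S) (T : κ → Finset ι) (hT : ∀ a, 0 < c (T a)) :
    BddBelow (Set.range fun γ => log (∑ S, expTilt c γ S) -
      ∑ j, (#{a | j ∈ T a} : ℝ) / Fintype.card κ * γ j) := by
  have hκ : (0 : ℝ) < Fintype.card κ := by exact_mod_cast Fintype.card_pos
  refine ⟨(∑ a, log (c (T a))) / Fintype.card κ, Set.forall_mem_range.2 fun γ => ?_⟩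
  have hcount : ∑ a, ∑ j ∈ T a, γ j = ∑ j, (#{a | j ∈ T a} : ℝ) * γ j :=
    calc ∑ a, ∑ j ∈ T a, γ j = ∑ a, ∑ j, if j ∈ T a then γ j else 0 := by
          simp_rw [sum_ite_mem, univ_inter]
      _ = ∑ j, ∑ a, if j ∈ T a then γ j else 0 := sum_comm
      _ = _ := by simp_rw [← sum_filter, sum_const, nsmul_eq_mul]
  have hsum : ∑ a, (log (c (T a)) + ∑ j ∈ T a, γ j) ≤
      Fintype.card κ * log (∑ S, expTilt c γ S) := by
    simpa using sum_le_sum fun a (_ : a ∈ univ) => log_add_sum_le_log_sum_expTilt hc (hT a) γ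
  rw [sum_add_distrib, hcount] at hsum
  simp_rw [div_mul_eq_mul_div, ← sum_div]
  rw [le_sub_iff_add_le, ← add_div, div_le_iff₀ hκ, mul_comm]
  linarith

end ExpTilt

section GeneratingPolynomial

variable {m : ℕ}

theorem aeval_genPoly (μ : Finset (Fin m) → ℝ) (z : Fin m → ℂ) :
    MvPolynomial.aeval z (genPoly μ) = ∑ S, (μ S : ℂ) * ∏ i ∈ S, z i := by
  simp [genPoly, map_sum, Complex.coe_algebraMap]

theorem realStable_genPoly_colMinor_sq {d : ℕ} (V : Matrix (Fin d) (Fin m) ℝ)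
    {S₀ : Finset (Fin m)} (hS₀ : V.colMinor S₀ ≠ 0) :
    RealStable (genPoly fun S => V.colMinor S ^ 2) := by
  intro z hz
  have hli : LinearIndependent ℂ (V.map ((↑) : ℝ → ℂ)) :=
    linearIndependent_of_colMinor_ne_zero (S := S₀) (by
      rw [show ((↑) : ℝ → ℂ) = algebraMap ℝ ℂ from rfl, colMinor_map]
      exact (map_ne_zero _).2 hS₀)
  convert det_map_mul_diagonal_mul_transpose_ne_zero V hli hz using 1
  rw [aeval_genPoly, det_mul_eq_sum_colMinor_mul_colMinor, transpose_transpose]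
  refine sum_congr rfl fun S _ => ?_
  rw [colMinor_mul_diagonal, show ((↑) : ℝ → ℂ) = algebraMap ℝ ℂ from rfl, colMinor_map]
  simp only [Complex.coe_algebraMap]
  push_cast
  ring

theorem RealStable.genPoly_expTilt_div {c : Finset (Fin m) → ℝ} (h : RealStable (genPoly c))
    (γ : Fin m → ℝ) {a : ℝ} (ha : a ≠ 0) : RealStable (genPoly fun S => expTilt c γ S / a) := by
  intro z hz
  have htilted := h (fun i => (rexp (γ i) : ℂ) * z i) fun i => by
    rw [Complex.im_ofReal_mul]
    exact mul_pos (exp_pos (γ i)) (hz i)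
  rw [aeval_genPoly] at htilted ⊢
  convert div_ne_zero htilted (Complex.ofReal_ne_zero.2 ha) using 1
  rw [sum_div]
  refine sum_congr rfl fun S _ => ?_
  simp only [expTilt, exp_sum, prod_mul_distrib]
  push_cast
  ring

theorem isBasisSet_iff_colMinor_ne_zero {d : ℕ} (v : Fin m → Fin d → ℝ) (S : Finset (Fin m)) :
    IsBasisSet v S ↔ (of v)ᵀ.colMinor S ≠ 0 := by
  rw [colMinor_ne_zero_iff]
  rfl

end GeneratingPolynomial

/-- If `v_1,...,v_m` contain `k ≥ 1` pairwise disjoint bases, then for every `η > 0` there is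
a strongly Rayleigh probability distribution supported on the bases whose marginal
probabilities are all at most `1/k + η`. -/
theorem stmt3 {m d k : ℕ} (v : Fin m → Fin d → ℝ) (hk : 1 ≤ k)
    (hdisj : ∃ T : Fin k → Finset (Fin m),
      (∀ a b : Fin k, a ≠ b → Disjoint (T a) (T b)) ∧ ∀ a, IsBasisSet v (T a))
    (η : ℝ) (hη : 0 < η) :
    ∃ μ : Finset (Fin m) → ℝ,
      (∀ S, 0 ≤ μ S) ∧
      (∑ S : Finset (Fin m), μ S = 1) ∧
      RealStable (genPoly μ) ∧
      (∀ S, 0 < μ S → IsBasisSet v S) ∧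
      (∀ i : Fin m,
        ∑ S ∈ Finset.univ.filter (fun S : Finset (Fin m) => i ∈ S), μ S ≤ 1 / (k : ℝ) + η) := by
  obtain ⟨T, hTdisj, hTbasis⟩ := hdisj
  let a₀ : Fin k := ⟨0, hk⟩
  have : Nonempty (Fin k) := ⟨a₀⟩
  set c : Finset (Fin m) → ℝ := fun S => (of v)ᵀ.colMinor S ^ 2
  have hc : ∀ S, 0 ≤ c S := fun S => sq_nonneg _
  have hcT : ∀ a, 0 < c (T a) := fun a =>
    sq_pos_of_ne_zero ((isBasisSet_iff_colMinor_ne_zero v _).1 (hTbasis a))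
  obtain ⟨γ, hγ⟩ := exists_sum_expTilt_filter_div_le hc (hcT a₀) _
    (bddBelow_log_sum_expTilt_sub hc T hcT) hη
  have hZ := sum_expTilt_pos hc (hcT a₀) γ
  refine ⟨fun S => expTilt c γ S / ∑ S, expTilt c γ S,
    fun S => div_nonneg (expTilt_nonneg hc γ S) hZ.le, by rw [← sum_div, div_self hZ.ne'],
    (realStable_genPoly_colMinor_sq _ ((isBasisSet_iff_colMinor_ne_zero v _).1
      (hTbasis a₀))).genPoly_expTilt_div γ hZ.ne', fun S hS => ?_, fun i => ?_⟩
  · refine (isBasisSet_iff_colMinor_ne_zero v S).2 fun h0 => ?_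
    simp [expTilt, c, h0] at hS
  · rw [← sum_div]
    refine (hγ i).trans ?_
    rw [Fintype.card_fin]
    gcongr
    exact_mod_cast card_le_one.2 fun a ha b hb => by_contra fun hab =>
      disjoint_left.1 (hTdisj a b hab) (mem_filter.1 ha).2 (mem_filter.1 hb).2
end
end

section
/- Let v_1,...,v_m ∈ ℝ^d be vectors that contain at least one basis, and let P = conv{1_T : T ⊆ [m] is a basis} ⊆ ℝ^m be the convex hull of the indicator vectors of bases. Then for every point x in the relative interior of P there exist positive weights λ_1,...,λ_m > 0 such that the probability distribution μ_λ on bases defined by μ_λ(T) = det(Σ_{i∈T} λ_i v_i v_iᵀ) / Σ_{T' basis} det(Σ_{i∈T'} λ_i v_i v_iᵀ) satisfies, for every i ∈ [m], Σ_{T basis : i∈T} μ_λ(T) = x(i). -/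
noncomputable section

open scoped Classical

/-!
Writing `a_T = det (∑_{i ∈ T} v_i v_iᵀ)`, a Gram-matrix factorisation shows
`det (∑_{i ∈ T} λ_i v_i v_iᵀ) = a_T ∏_{i ∈ T} λ_i`, so with `λ_i = exp θ_i` the distribution `μ_λ`
is the exponential family `μ_θ(T) ∝ a_T exp θ(T)` on bases, where `θ(T) = ∑_{i ∈ T} θ_i`.
Its marginals are the partial derivatives of `log Z(θ)`, so a global minimiser of
`log Z(θ) - ⟨θ, x⟩` has marginals `x`. Such a minimiser exists: writing `x = ∑_T c_T 1_T` with
all `c_T > 0`, the objective is at least `C + max_T (θ(T) - ⟨θ, x⟩)`, a positively homogeneous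
function that is positive unless `θ(T)` is the same for all bases, and the objective is invariant
under adding such a `θ`.
-/

open Matrix Filter

section Gram

variable {ι n : Type*} [Fintype n] [DecidableEq n]

theorem sum_smul_vecMulVec_eq_transpose_mul_diagonal_mul (v : ι → n → ℝ) (T : Finset ι)
    (e : T ≃ n) (c : ι → ℝ) :
    ∑ j ∈ T, c j • vecMulVec (v j) (v j) =
      (of fun k => v (e.symm k))ᵀ * diagonal (fun k => c (e.symm k)) *
        of fun k => v (e.symm k) := by
  ext i l
  simp only [Matrix.sum_apply, Matrix.smul_apply, vecMulVec_apply, smul_eq_mul, mul_apply,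
    transpose_apply, of_apply, diagonal_apply, mul_ite, mul_zero, Finset.sum_ite_eq',
    Finset.mem_univ, if_true]
  rw [← Finset.sum_coe_sort T]
  exact Fintype.sum_equiv e _ _ fun j => by simp only [Equiv.symm_apply_apply]; ring

theorem det_sum_smul_vecMulVec (v : ι → n → ℝ) {T : Finset ι} (hT : T.card = Fintype.card n)
    (c : ι → ℝ) :
    (∑ j ∈ T, c j • vecMulVec (v j) (v j)).det =
      (∏ j ∈ T, c j) * (∑ j ∈ T, vecMulVec (v j) (v j)).det := by
  let e : T ≃ n := Fintype.equivOfCardEq (by rw [Fintype.card_coe, hT])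
  have hone := sum_smul_vecMulVec_eq_transpose_mul_diagonal_mul v T e fun _ => 1
  simp only [one_smul] at hone
  rw [sum_smul_vecMulVec_eq_transpose_mul_diagonal_mul v T e, hone]
  simp only [det_mul, det_diagonal, Finset.prod_const_one, mul_one]
  rw [← Finset.prod_coe_sort T, ← Fintype.prod_equiv e (fun j : T => c j)
    (fun k => c (e.symm k)) fun j => by simp only [Equiv.symm_apply_apply]]
  ring

theorem det_sum_vecMulVec_pos (v : ι → n → ℝ) {T : Finset ι} (hT : T.card = Fintype.card n)
    (hv : LinearIndependent ℝ fun j : T => v j) :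
    0 < (∑ j ∈ T, vecMulVec (v j) (v j)).det := by
  let e : T ≃ n := Fintype.equivOfCardEq (by rw [Fintype.card_coe, hT])
  have hone := sum_smul_vecMulVec_eq_transpose_mul_diagonal_mul v T e fun _ => 1
  simp only [one_smul, diagonal_one, Matrix.mul_one] at hone
  have hunit : IsUnit (of fun k => v (e.symm k)) :=
    linearIndependent_rows_iff_isUnit.mp (hv.comp e.symm e.symm.injective)
  rw [hone, det_mul, det_transpose]
  exact mul_self_pos.mpr ((isUnit_iff_isUnit_det _).mp hunit).ne_zero

end Gram

section Coercive

variable {E : Type*} [NormedAddCommGroup E] [NormedSpace ℝ E] [FiniteDimensional ℝ E]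
  {f g : E → ℝ}

theorem exists_pos_mul_norm_le (hg : Continuous g)
    (hg_smul : ∀ t : ℝ, 0 ≤ t → ∀ u, g (t • u) = t * g u)
    (hg_pos : ∀ u ≠ 0, 0 < g u) : ∃ ε > 0, ∀ u, ε * ‖u‖ ≤ g u := by
  have hg0 : g 0 = 0 := by simpa using hg_smul 0 le_rfl 0
  cases subsingleton_or_nontrivial E
  · exact ⟨1, one_pos, fun u => by simp [Subsingleton.elim u 0, hg0]⟩
  obtain ⟨w, hw, hw_min⟩ := (isCompact_sphere (0 : E) 1).exists_isMinOn
    (NormedSpace.sphere_nonempty.mpr zero_le_one) hg.continuousOn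
  have hw_norm : ‖w‖ = 1 := by simpa using hw
  refine ⟨g w, hg_pos w (by rintro rfl; simp at hw_norm), fun u => ?_⟩
  rcases eq_or_ne u 0 with rfl | hu
  · simp [hg0]
  have hu_norm : ‖u‖ ≠ 0 := norm_ne_zero_iff.mpr hu
  have hunit : ‖u‖⁻¹ • u ∈ Metric.sphere (0 : E) 1 := by
    simp [norm_smul, hu_norm]
  calc g w * ‖u‖ ≤ g (‖u‖⁻¹ • u) * ‖u‖ := by gcongr; exact hw_min hunit
    _ = g u := by
      rw [mul_comm, ← hg_smul _ (norm_nonneg u), smul_smul, mul_inv_cancel₀ hu_norm, one_smul]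

theorem exists_forall_le_of_invariant_of_coercive {V : Submodule ℝ E} (hf : Continuous f)
    (hf_add : ∀ θ, ∀ w ∈ V, f (θ + w) = f θ) (hg : Continuous g)
    (hg_smul : ∀ t : ℝ, 0 ≤ t → ∀ u, g (t • u) = t * g u) (hg_pos : ∀ u ∉ V, 0 < g u) (C : ℝ)
    (hfg : ∀ u, C + g u ≤ f u) : ∃ θ₀, ∀ θ, f θ₀ ≤ f θ := by
  obtain ⟨W, hVW⟩ := V.exists_isCompl
  obtain ⟨ε, hε, hεg⟩ := exists_pos_mul_norm_le (g := fun u : W => g u)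
    (hg.comp continuous_subtype_val) (fun t ht u => hg_smul t ht u)
    fun u hu => hg_pos u fun huV => hu <| by
      simpa using (Submodule.disjoint_def.mp hVW.disjoint) u huV u.2
  have hf_tendsto : Tendsto (fun u : W => f u) (cocompact W) atTop := by
    rw [← Metric.cobounded_eq_cocompact]
    refine tendsto_atTop_mono (fun u => ?_) (tendsto_atTop_add_const_left _ C
      (tendsto_norm_cobounded_atTop.const_mul_atTop hε))
    linarith [hεg u, hfg u]
  obtain ⟨u₀, hu₀⟩ := (hf.comp continuous_subtype_val).exists_forall_le hf_tendsto
  refine ⟨u₀, fun θ => ?_⟩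
  obtain ⟨y, z, hy, hz, rfl⟩ := Submodule.codisjoint_iff_exists_add_eq.mp hVW.codisjoint θ
  rw [add_comm, hf_add z y hy]
  exact hu₀ ⟨z, hz⟩

end Coercive

section ExpFamily

variable {ι : Type*}

def partitionFunction (B : Finset (Finset ι)) (a : Finset ι → ℝ) (θ : ι → ℝ) : ℝ :=
  ∑ T ∈ B, a T * Real.exp (∑ i ∈ T, θ i)

def equalSumSubmodule (B : Finset (Finset ι)) : Submodule ℝ (ι → ℝ) where
  carrier := {θ | ∀ T ∈ B, ∀ T' ∈ B, ∑ i ∈ T, θ i = ∑ i ∈ T', θ i}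
  add_mem' {θ θ'} hθ hθ' T hT T' hT' := by
    simp only [Pi.add_apply, Finset.sum_add_distrib, hθ T hT T' hT', hθ' T hT T' hT']
  zero_mem' := by simp
  smul_mem' t θ hθ T hT T' hT' := by
    simp only [Pi.smul_apply, smul_eq_mul, ← Finset.mul_sum, hθ T hT T' hT']

variable {B : Finset (Finset ι)} {a c : Finset ι → ℝ} {x : ι → ℝ}

theorem partitionFunction_pos (hB : B.Nonempty) (ha : ∀ T ∈ B, 0 < a T) (θ : ι → ℝ) :
    0 < partitionFunction B a θ :=
  Finset.sum_pos (fun T hT => mul_pos (ha T hT) (Real.exp_pos _)) hB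

theorem partitionFunction_add_of_mem_equalSumSubmodule {T₀ : Finset ι} (hT₀ : T₀ ∈ B)
    (θ : ι → ℝ) {w : ι → ℝ} (hw : w ∈ equalSumSubmodule B) :
    partitionFunction B a (θ + w) = Real.exp (∑ i ∈ T₀, w i) * partitionFunction B a θ := by
  unfold partitionFunction
  rw [Finset.mul_sum]
  refine Finset.sum_congr rfl fun T hT => ?_
  rw [Pi.add_def, Finset.sum_add_distrib, hw T hT T₀ hT₀, Real.exp_add]
  ring

theorem partitionFunction_add_smul_single [DecidableEq ι] (B : Finset (Finset ι))
    (a : Finset ι → ℝ) (θ : ι → ℝ) (i : ι) (t : ℝ) :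
    partitionFunction B a (θ + t • Pi.single i 1) =
      Real.exp t * partitionFunction {T ∈ B | i ∈ T} a θ +
        partitionFunction {T ∈ B | i ∉ T} a θ := by
  have hsum : ∀ T : Finset ι, ∑ j ∈ T, (θ + t • Pi.single i 1 : ι → ℝ) j =
      ∑ j ∈ T, θ j + if i ∈ T then t else 0 := by
    intro T
    simp [Finset.sum_add_distrib, Pi.single_apply]
  unfold partitionFunction
  rw [← Finset.sum_filter_add_sum_filter_not B (fun T => i ∈ T), Finset.mul_sum]
  congr 1 <;> refine Finset.sum_congr rfl fun T hT => ?_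
  · rw [hsum, if_pos (Finset.mem_filter.mp hT).2, Real.exp_add]
    ring
  · rw [hsum, if_neg (Finset.mem_filter.mp hT).2, add_zero]

variable [Fintype ι]

def dualObjective (B : Finset (Finset ι)) (a : Finset ι → ℝ) (x θ : ι → ℝ) : ℝ :=
  Real.log (partitionFunction B a θ) - ∑ i, θ i * x i

def maxExcess (B : Finset (Finset ι)) (hB : B.Nonempty) (x θ : ι → ℝ) : ℝ :=
  B.sup' hB fun T => ∑ i ∈ T, θ i - ∑ i, θ i * x i

theorem continuous_dualObjective (hB : B.Nonempty) (ha : ∀ T ∈ B, 0 < a T) :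
    Continuous (dualObjective B a x) := by
  have hZ : Continuous (partitionFunction B a) := by
    unfold partitionFunction; fun_prop
  exact (hZ.log fun θ => (partitionFunction_pos hB ha θ).ne').sub (by fun_prop)

theorem continuous_maxExcess (hB : B.Nonempty) : Continuous (maxExcess B hB x) :=
  Continuous.finset_sup'_apply hB fun _ _ => by fun_prop

theorem maxExcess_smul (hB : B.Nonempty) {t : ℝ} (ht : 0 ≤ t) (θ : ι → ℝ) :
    maxExcess B hB x (t • θ) = t * maxExcess B hB x θ := by
  simp only [maxExcess, mul_comm t, Finset.sup'_mul₀ ht]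
  congr 1
  ext T
  simp only [Pi.smul_apply, smul_eq_mul, ← Finset.mul_sum, mul_assoc]
  ring

theorem inf'_log_add_maxExcess_le_dualObjective (hB : B.Nonempty) (ha : ∀ T ∈ B, 0 < a T)
    (θ : ι → ℝ) :
    B.inf' hB (fun T => Real.log (a T)) + maxExcess B hB x θ ≤ dualObjective B a x θ := by
  rw [← le_sub_iff_add_le', maxExcess, Finset.sup'_le_iff]
  intro T hT
  have hterm : Real.log (a T * Real.exp (∑ i ∈ T, θ i)) ≤ Real.log (partitionFunction B a θ) :=
    Real.log_le_log (mul_pos (ha T hT) (Real.exp_pos _)) <|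
      Finset.single_le_sum (f := fun T => a T * Real.exp (∑ i ∈ T, θ i))
        (fun T hT => (mul_pos (ha T hT) (Real.exp_pos _)).le) hT
  rw [Real.log_mul (ha T hT).ne' (Real.exp_pos _).ne', Real.log_exp] at hterm
  have hinf := Finset.inf'_le (fun T => Real.log (a T)) hT
  unfold dualObjective
  linarith

variable [DecidableEq ι]

theorem sum_mul_eq_sum_mul_sum (hx : ∀ i, x i = ∑ T ∈ B with i ∈ T, c T) (θ : ι → ℝ) :
    ∑ i, θ i * x i = ∑ T ∈ B, c T * ∑ i ∈ T, θ i := by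
  simp_rw [hx, Finset.mul_sum, Finset.sum_filter]
  rw [Finset.sum_comm]
  refine Finset.sum_congr rfl fun T _ => ?_
  rw [← Finset.sum_filter, Finset.filter_mem_eq_inter, Finset.univ_inter]
  exact Finset.sum_congr rfl fun i _ => mul_comm _ _

theorem dualObjective_add_of_mem_equalSumSubmodule (hB : B.Nonempty) (ha : ∀ T ∈ B, 0 < a T)
    (hc : ∑ T ∈ B, c T = 1) (hx : ∀ i, x i = ∑ T ∈ B with i ∈ T, c T) (θ : ι → ℝ) {w : ι → ℝ}
    (hw : w ∈ equalSumSubmodule B) : dualObjective B a x (θ + w) = dualObjective B a x θ := by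
  obtain ⟨T₀, hT₀⟩ := hB
  have hwx : ∑ i, w i * x i = ∑ i ∈ T₀, w i := by
    rw [sum_mul_eq_sum_mul_sum hx, Finset.sum_congr rfl fun T hT => by rw [hw T hT T₀ hT₀],
      ← Finset.sum_mul, hc, one_mul]
  unfold dualObjective
  rw [partitionFunction_add_of_mem_equalSumSubmodule hT₀ θ hw,
    Real.log_mul (Real.exp_pos _).ne' (partitionFunction_pos ⟨T₀, hT₀⟩ ha θ).ne', Real.log_exp]
  simp only [Pi.add_apply, add_mul, Finset.sum_add_distrib, hwx]
  ring

theorem maxExcess_pos (hB : B.Nonempty) (hc_pos : ∀ T ∈ B, 0 < c T) (hc : ∑ T ∈ B, c T = 1)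
    (hx : ∀ i, x i = ∑ T ∈ B with i ∈ T, c T) {θ : ι → ℝ} (hθ : θ ∉ equalSumSubmodule B) :
    0 < maxExcess B hB x θ := by
  by_contra! hle
  set L := fun T => ∑ i ∈ T, θ i - ∑ i, θ i * x i
  have hL_nonpos : ∀ T ∈ B, c T * L T ≤ 0 := fun T hT =>
    mul_nonpos_of_nonneg_of_nonpos (hc_pos T hT).le ((Finset.le_sup' L hT).trans hle)
  -- `x` is a `c`-weighted average of the indicators of `B`, so the `c`-average of `L` vanishes
  have hL_sum : ∑ T ∈ B, c T * L T = 0 := by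
    simp only [L, mul_sub, Finset.sum_sub_distrib, ← Finset.sum_mul, hc, one_mul,
      sum_mul_eq_sum_mul_sum hx, sub_self]
  have hL_zero : ∀ T ∈ B, L T = 0 := fun T hT =>
    (mul_eq_zero.mp ((Finset.sum_eq_zero_iff_of_nonpos hL_nonpos).mp hL_sum T hT)).resolve_left
      (hc_pos T hT).ne'
  exact hθ fun T hT T' hT' => by linarith [hL_zero T hT, hL_zero T' hT']

theorem partitionFunction_filter_div_eq_of_forall_le (hB : B.Nonempty) (ha : ∀ T ∈ B, 0 < a T)
    {θ₀ : ι → ℝ} (hθ₀ : ∀ θ, dualObjective B a x θ₀ ≤ dualObjective B a x θ) (i : ι) :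
    partitionFunction {T ∈ B | i ∈ T} a θ₀ / partitionFunction B a θ₀ = x i := by
  set A := partitionFunction {T ∈ B | i ∈ T} a θ₀
  set R := partitionFunction {T ∈ B | i ∉ T} a θ₀
  have hZ : partitionFunction B a θ₀ = A + R := by
    simpa using partitionFunction_add_smul_single B a θ₀ i 0
  have hpos : 0 < A + R := hZ ▸ partitionFunction_pos hB ha θ₀
  have hline : ∀ t, dualObjective B a x (θ₀ + t • Pi.single i 1) =
      Real.log (Real.exp t * A + R) - t * x i - ∑ j, θ₀ j * x j := by
    intro t
    simp [dualObjective, partitionFunction_add_smul_single, A, R, add_mul, Finset.sum_add_distrib,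
      Pi.single_apply]
    ring
  have hmin : IsLocalMin (fun t => Real.log (Real.exp t * A + R) - t * x i) 0 :=
    Eventually.of_forall fun t => by
      have h := hθ₀ (θ₀ + t • Pi.single i 1)
      have h0 := hline 0
      simp only [zero_smul, add_zero, Real.exp_zero, one_mul, zero_mul, sub_zero] at h0
      rw [hline, h0] at h
      simp only [Real.exp_zero, one_mul, zero_mul, sub_zero]
      linarith
  have hderiv : HasDerivAt (fun t => Real.log (Real.exp t * A + R) - t * x i)
      (A / (A + R) - x i) 0 := by
    have := ((((Real.hasDerivAt_exp 0).mul_const A).add_const R).log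
      (by simpa using hpos.ne')).fun_sub (hasDerivAt_mul_const (x i))
    rwa [Real.exp_zero, one_mul] at this
  rw [hZ]
  linarith [hmin.hasDerivAt_eq_zero hderiv]

theorem exists_partitionFunction_filter_div_eq (hB : B.Nonempty) (ha : ∀ T ∈ B, 0 < a T)
    (hc_pos : ∀ T ∈ B, 0 < c T) (hc : ∑ T ∈ B, c T = 1)
    (hx : ∀ i, x i = ∑ T ∈ B with i ∈ T, c T) :
    ∃ θ : ι → ℝ, ∀ i, partitionFunction {T ∈ B | i ∈ T} a θ / partitionFunction B a θ = x i := by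
  obtain ⟨θ₀, hθ₀⟩ := exists_forall_le_of_invariant_of_coercive (continuous_dualObjective hB ha)
    (fun θ w hw => dualObjective_add_of_mem_equalSumSubmodule hB ha hc hx θ hw)
    (continuous_maxExcess hB) (fun t ht θ => maxExcess_smul hB ht θ)
    (fun θ hθ => maxExcess_pos hB hc_pos hc hx hθ) _
    (inf'_log_add_maxExcess_le_dualObjective hB ha)
  exact ⟨θ₀, partitionFunction_filter_div_eq_of_forall_le hB ha hθ₀⟩

end ExpFamily

/-- For every point `x` in the relative interior of the basis polytope
`P = conv{1_T : T basis}` (equivalently, `x` is a convex combination of the indicator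
vectors of all bases with strictly positive coefficients), there are positive weights
`λ_1,...,λ_m > 0` such that the determinantal distribution
`μ_λ(T) ∝ det(Σ_{i∈T} λ_i v_i v_iᵀ)` on bases has marginal probabilities exactly `x(i)`. -/
theorem stmt4 {m d : ℕ} (v : Fin m → Fin d → ℝ)
    (hbasis : ∃ T : Finset (Fin m), IsBasisSet v T)
    (x : Fin m → ℝ)
    (hx : ∃ c : Finset (Fin m) → ℝ,
      (∀ T, IsBasisSet v T → 0 < c T) ∧
      (∀ T, ¬ IsBasisSet v T → c T = 0) ∧
      (∑ T : Finset (Fin m), c T = 1) ∧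
      (∀ i : Fin m, x i = ∑ T ∈ Finset.univ.filter (fun T : Finset (Fin m) => i ∈ T), c T)) :
    ∃ lam : Fin m → ℝ, (∀ i, 0 < lam i) ∧
      ∀ i : Fin m,
        (∑ T ∈ Finset.univ.filter
            (fun T : Finset (Fin m) => IsBasisSet v T ∧ i ∈ T),
            (∑ j ∈ T, lam j • Matrix.vecMulVec (v j) (v j)).det) /
        (∑ T ∈ Finset.univ.filter (fun T : Finset (Fin m) => IsBasisSet v T),
            (∑ j ∈ T, lam j • Matrix.vecMulVec (v j) (v j)).det)
        = x i := by
  obtain ⟨c, hc_pos, hc_zero, hc, hx⟩ := hx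
  set B := Finset.univ.filter (IsBasisSet v)
  have hc_sum_eq : ∀ s : Finset (Finset (Fin m)), ∑ T ∈ s, c T = ∑ T ∈ B ∩ s, c T := fun s =>
    (Finset.sum_subset Finset.inter_subset_right fun T _ hT => hc_zero T (by simp_all [B])).symm
  obtain ⟨θ, hθ⟩ := exists_partitionFunction_filter_div_eq (B := B)
    (a := fun T => (∑ j ∈ T, vecMulVec (v j) (v j)).det)
    (by simpa [B, Finset.Nonempty] using hbasis)
    (fun T hT => det_sum_vecMulVec_pos v (by simp [(Finset.mem_filter.mp hT).2.1])
      (Finset.mem_filter.mp hT).2.2)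
    (fun T hT => hc_pos T (Finset.mem_filter.mp hT).2)
    (by rw [← hc, hc_sum_eq Finset.univ, Finset.inter_univ])
    (x := x) (fun i => by rw [hx, hc_sum_eq, Finset.inter_filter, Finset.inter_univ])
  have hdet : ∀ T ∈ B, (∑ j ∈ T, Real.exp (θ j) • vecMulVec (v j) (v j)).det =
      (∑ j ∈ T, vecMulVec (v j) (v j)).det * Real.exp (∑ j ∈ T, θ j) := fun T hT => by
    rw [det_sum_smul_vecMulVec v (by simp [(Finset.mem_filter.mp hT).2.1]), Real.exp_sum,
      mul_comm]
  refine ⟨fun j => Real.exp (θ j), fun j => Real.exp_pos _, fun i => ?_⟩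
  rw [← Finset.filter_filter, Finset.sum_congr rfl hdet,
    Finset.sum_congr rfl fun T hT => hdet T (Finset.mem_filter.mp hT).1]
  exact hθ i
end
end

section
/- Let v_1,...,v_m ∈ ℝ^d be vectors that contain k pairwise disjoint bases (k ≥ 1), and let P = conv{1_T : T ⊆ [m] is a basis} ⊆ ℝ^m. Then for every η > 0 there exists a point x in the relative interior of P such that x(i) ≤ 1/k + η for every i ∈ [m]. -/
/-!
Only the combinatorics of the set system matters. Mix the uniform distribution on all bases,
with a small weight `t`, into the distribution that picks one of the `k` disjoint bases
uniformly. The mixture charges every basis, and since an element lies in at most one of the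
disjoint bases, its coverage is at most `t + (1 - t) / k ≤ 1 / k + η` once `t ≤ η`.
-/

noncomputable section

open Finset Function

namespace SetWeight

variable {α ι : Type*} [DecidableEq α]

section Fintype

variable [Fintype α]

/-- The `i`-th coordinate of `∑ S, c S • 1_S`. -/
def coverage (c : Finset α → ℝ) (i : α) : ℝ :=
  ∑ S ∈ univ.filter (fun S => i ∈ S), c S

lemma coverage_le_one {c : Finset α → ℝ} (hc : ∀ S, 0 ≤ c S) (hsum : ∑ S, c S = 1) (i : α) :
    coverage c i ≤ 1 :=
  hsum ▸ sum_le_sum_of_subset_of_nonneg (subset_univ _) fun S _ _ => hc S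

lemma coverage_convexComb (c c' : Finset α → ℝ) (t : ℝ) (i : α) :
    coverage (fun S => t * c S + (1 - t) * c' S) i =
      t * coverage c i + (1 - t) * coverage c' i := by
  simp only [coverage, sum_add_distrib, mul_sum]

end Fintype

def uniformWeight (B : Finset (Finset α)) (S : Finset α) : ℝ :=
  if S ∈ B then (#B : ℝ)⁻¹ else 0

lemma uniformWeight_nonneg (B : Finset (Finset α)) (S : Finset α) : 0 ≤ uniformWeight B S := by
  unfold uniformWeight; split_ifs <;> positivity

lemma uniformWeight_pos {B : Finset (Finset α)} {S : Finset α} (hS : S ∈ B) :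
    0 < uniformWeight B S := by
  rw [uniformWeight, if_pos hS]
  exact inv_pos.mpr (Nat.cast_pos.mpr (card_pos.mpr ⟨S, hS⟩))

lemma uniformWeight_of_notMem {B : Finset (Finset α)} {S : Finset α} (hS : S ∉ B) :
    uniformWeight B S = 0 :=
  if_neg hS

lemma sum_uniformWeight [Fintype α] {B : Finset (Finset α)} (hB : B.Nonempty) :
    ∑ S, uniformWeight B S = 1 := by
  simp only [uniformWeight]
  rw [← sum_filter, filter_mem_eq_inter, univ_inter, sum_const, nsmul_eq_mul,
    mul_inv_cancel₀ (Nat.cast_ne_zero.mpr hB.card_pos.ne')]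

variable [Fintype ι]

/-- The law of `T a` for `a` uniform in `ι`. -/
def familyWeight (T : ι → Finset α) (S : Finset α) : ℝ :=
  (#(univ.filter fun a => T a = S) : ℝ) / Fintype.card ι

lemma familyWeight_nonneg (T : ι → Finset α) (S : Finset α) : 0 ≤ familyWeight T S := by
  unfold familyWeight; positivity

lemma familyWeight_of_forall_ne {T : ι → Finset α} {S : Finset α} (hS : ∀ a, T a ≠ S) :
    familyWeight T S = 0 := by
  simp [familyWeight, filter_false_of_mem fun a _ => hS a]

lemma sum_familyWeight [Fintype α] [Nonempty ι] (T : ι → Finset α) :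
    ∑ S, familyWeight T S = 1 := by
  simp only [familyWeight]
  rw [← sum_div, ← Nat.cast_sum, sum_card_fiberwise_eq_card_filter]
  simp

lemma coverage_familyWeight [Fintype α] (T : ι → Finset α) (i : α) :
    coverage (familyWeight T) i = (#(univ.filter fun a => i ∈ T a) : ℝ) / Fintype.card ι := by
  simp only [coverage, familyWeight]
  rw [← sum_div, ← Nat.cast_sum, sum_card_fiberwise_eq_card_filter]
  simp

lemma coverage_familyWeight_le [Fintype α] {T : ι → Finset α} (hT : Pairwise (Disjoint on T))
    (i : α) :
    coverage (familyWeight T) i ≤ 1 / Fintype.card ι := by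
  have hle : #(univ.filter fun a => i ∈ T a) ≤ 1 :=
    card_le_one.mpr fun a ha b hb => by_contra fun hab =>
      disjoint_left.mp (hT hab) (mem_filter.mp ha).2 (mem_filter.mp hb).2
  rw [coverage_familyWeight]
  gcongr
  exact_mod_cast hle

end SetWeight

open SetWeight

theorem exists_weight_pos_coverage_le {α ι : Type*} [Fintype α] [DecidableEq α] [Fintype ι]
    [Nonempty ι] (p : Finset α → Prop) [DecidablePred p] (T : ι → Finset α)
    (hT : Pairwise (Disjoint on T)) (hpT : ∀ a, p (T a)) {η : ℝ} (hη : 0 < η) :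
    ∃ c : Finset α → ℝ, (∀ S, p S → 0 < c S) ∧ (∀ S, ¬ p S → c S = 0) ∧
      ∑ S, c S = 1 ∧ ∀ i, coverage c i ≤ 1 / Fintype.card ι + η := by
  set B := univ.filter p
  have hB : B.Nonempty := ⟨T (Classical.arbitrary ι), by simp [B, hpT]⟩
  set t := min η 1
  have ht0 : 0 < t := lt_min hη one_pos
  have ht1 : 0 ≤ 1 - t := sub_nonneg.mpr (min_le_right _ _)
  refine ⟨fun S => t * uniformWeight B S + (1 - t) * familyWeight T S, fun S hS => ?_,
    fun S hS => ?_, ?_, fun i => ?_⟩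
  · have := uniformWeight_pos (B := B) (mem_filter.mpr ⟨mem_univ S, hS⟩)
    have := familyWeight_nonneg T S
    positivity
  · dsimp only
    rw [uniformWeight_of_notMem fun h => hS (mem_filter.mp h).2,
      familyWeight_of_forall_ne fun a h => hS (by rw [← h]; exact hpT a)]
    ring
  · rw [sum_add_distrib, ← mul_sum, ← mul_sum, sum_uniformWeight hB, sum_familyWeight]
    ring
  · have hu := coverage_le_one (uniformWeight_nonneg B) (sum_uniformWeight hB) i
    have hf := coverage_familyWeight_le hT i
    have hk : 0 ≤ 1 / (Fintype.card ι : ℝ) := by positivity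
    calc coverage _ i = t * coverage (uniformWeight B) i + (1 - t) * coverage (familyWeight T) i :=
          coverage_convexComb _ _ _ _
      _ ≤ t * 1 + (1 - t) * (1 / Fintype.card ι) := by gcongr
      _ ≤ 1 / Fintype.card ι + η := by nlinarith [min_le_left η 1]

/-- If `v_1,...,v_m` contain `k ≥ 1` pairwise disjoint bases, then for every `η > 0` there is
a point `x` in the relative interior of the basis polytope `P = conv{1_T : T basis}`
(equivalently, a convex combination of the indicator vectors of all bases with strictly
positive coefficients) such that `x i ≤ 1/k + η` for every `i`. -/
theorem stmt5 {m d k : ℕ} (v : Fin m → Fin d → ℝ) (hk : 1 ≤ k)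
    (hdisj : ∃ T : Fin k → Finset (Fin m),
      (∀ a b : Fin k, a ≠ b → Disjoint (T a) (T b)) ∧ ∀ a, IsBasisSet v (T a))
    (η : ℝ) (hη : 0 < η) :
    ∃ x : Fin m → ℝ,
      (∃ c : Finset (Fin m) → ℝ,
        (∀ T, IsBasisSet v T → 0 < c T) ∧
        (∀ T, ¬ IsBasisSet v T → c T = 0) ∧
        (∑ T : Finset (Fin m), c T = 1) ∧
        (∀ i : Fin m,
          x i = ∑ T ∈ Finset.univ.filter (fun T : Finset (Fin m) => i ∈ T), c T)) ∧
      ∀ i : Fin m, x i ≤ 1 / (k : ℝ) + η := by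
  classical
  obtain ⟨T, hT, hbasis⟩ := hdisj
  have : Nonempty (Fin k) := ⟨⟨0, hk⟩⟩
  obtain ⟨c, hpos, hzero, hsum, hcov⟩ :=
    exists_weight_pos_coverage_le (IsBasisSet v) T (fun a b => hT a b) hbasis hη
  refine ⟨coverage c, ⟨c, hpos, hzero, hsum, fun i => rfl⟩, fun i => ?_⟩
  simpa using hcov i
end
end

section
/- Let F ⊆ 2^[m] be a nonempty family and let {f_S}_{S∈F} be an interlacing family of real-rooted degree-d polynomials with positive leading coefficients. Then there exists S ∈ F such that the largest real root of f_S is at most the largest real root of f_∅ = Σ_{S∈F} f_S. -/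
/-!
Walk down the binary tree of subfamilies `F_{s_1,...,s_k}`. The partial sum at a node is the sum
of the partial sums at its two children, which have a common interlacing. If `M` is the smaller of
the two largest roots, the common interlacing forces the other child to be `≤ 0` at `M`, so the
parent sum has a root `≥ M`: one child has all its roots below a root of the parent. Following
such children for `m` steps ends at a single set `S`.
-/

noncomputable section

/-- Every complex root of `f` is real. -/
def RealRooted (f : Polynomial ℝ) : Prop :=
  ∀ z : ℂ, (Polynomial.aeval z) f = 0 → z.im = 0

/-- `g` interlaces `f`: `g = α₀·Π_{i=1}^{n}(x−α_i)`, `f = β₀·Π_{i=1}^{n+1}(x−β_i)` with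
`β₁ ≤ α₁ ≤ β₂ ≤ α₂ ≤ ... ≤ α_n ≤ β_{n+1}`. -/
def Interlaces (g f : Polynomial ℝ) : Prop :=
  ∃ (n : ℕ) (a b : ℝ) (α : Fin n → ℝ) (β : Fin (n + 1) → ℝ),
    a ≠ 0 ∧ b ≠ 0 ∧
    g = Polynomial.C a * ∏ i, (Polynomial.X - Polynomial.C (α i)) ∧
    f = Polynomial.C b * ∏ i, (Polynomial.X - Polynomial.C (β i)) ∧
    ∀ i : Fin n, β i.castSucc ≤ α i ∧ α i ≤ β i.succ

/-- Two polynomials have a common interlacing if a single polynomial interlaces both. -/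
def CommonInterlacing (f₀ f₁ : Polynomial ℝ) : Prop :=
  ∃ g : Polynomial ℝ, Interlaces g f₀ ∧ Interlaces g f₁

/-- The subfamily `F_{s_1,...,s_k}` of sets agreeing with the pattern `s` on the first `k`
elements. -/
def subFamily {m : ℕ} (F : Finset (Finset (Fin m))) {k : ℕ} (hk : k ≤ m)
    (s : Fin k → Bool) : Finset (Finset (Fin m)) :=
  F.filter (fun S => ∀ i : Fin k, (Fin.castLE hk i ∈ S ↔ s i = true))

/-- `{f_S}_{S∈F}` is an interlacing family: whenever both `F_{s_1,...,s_k,0}` and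
`F_{s_1,...,s_k,1}` are nonempty, the partial sums `f_{s_1,...,s_k,0}` and
`f_{s_1,...,s_k,1}` have a common interlacing. -/
def InterlacingFamily {m : ℕ} (F : Finset (Finset (Fin m)))
    (f : Finset (Fin m) → Polynomial ℝ) : Prop :=
  ∀ (k : ℕ) (hk : k < m) (s : Fin k → Bool),
    (subFamily F (Nat.succ_le_of_lt hk) (Fin.snoc s false)).Nonempty →
    (subFamily F (Nat.succ_le_of_lt hk) (Fin.snoc s true)).Nonempty →
    CommonInterlacing
      (∑ S ∈ subFamily F (Nat.succ_le_of_lt hk) (Fin.snoc s false), f S)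
      (∑ S ∈ subFamily F (Nat.succ_le_of_lt hk) (Fin.snoc s true), f S)
open Polynomial Finset

namespace Polynomial

theorem isRoot_C_mul_prod_X_sub_C_iff {ι : Type*} [Fintype ι] {b x : ℝ} (hb : b ≠ 0) (β : ι → ℝ) :
    (C b * ∏ i, (X - C (β i))).IsRoot x ↔ ∃ i, x = β i := by
  simp [eval_prod, hb, prod_eq_zero_iff, sub_eq_zero]

theorem leadingCoeff_C_mul_prod_X_sub_C {ι : Type*} [Fintype ι] (b : ℝ) (β : ι → ℝ) :
    (C b * ∏ i, (X - C (β i))).leadingCoeff = b := by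
  simp [leadingCoeff_prod]

theorem leadingCoeff_add_pos {p q : ℝ[X]} (hp : 0 < p.leadingCoeff) (hq : 0 < q.leadingCoeff) :
    0 < (p + q).leadingCoeff := by
  rcases lt_trichotomy p.degree q.degree with h | h | h
  · rwa [leadingCoeff_add_of_degree_lt h]
  · rw [leadingCoeff_add_of_degree_eq h (by positivity)]; positivity
  · rwa [leadingCoeff_add_of_degree_lt' h]

theorem leadingCoeff_sum_pos {ι : Type*} {s : Finset ι} (hs : s.Nonempty)
    {f : ι → ℝ[X]} (hf : ∀ i ∈ s, 0 < (f i).leadingCoeff) :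
    0 < (∑ i ∈ s, f i).leadingCoeff :=
  sum_induction_nonempty f (fun p => 0 < p.leadingCoeff) (fun _ _ => leadingCoeff_add_pos) hs hf

theorem exists_isRoot_ge_of_eval_nonpos {p : ℝ[X]} (hp : 0 < p.leadingCoeff) {x : ℝ}
    (hx : p.eval x ≤ 0) : ∃ y, x ≤ y ∧ p.IsRoot y := by
  have hdeg : 0 < p.degree := by
    by_contra! h
    rw [eq_C_of_degree_le_zero h, eval_C] at hx
    rw [leadingCoeff, natDegree_eq_zero_iff_degree_le_zero.2 h] at hp
    linarith
  obtain ⟨z, hz, hxz⟩ := ((tendsto_atTop_of_leadingCoeff_nonneg p hdeg hp.le).eventually_ge_atTop 0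
    |>.and (Filter.eventually_ge_atTop x)).exists
  obtain ⟨y, hy, hroot⟩ := intermediate_value_Icc hxz p.continuous.continuousOn ⟨hx, hz⟩
  exact ⟨y, hy.1, hroot⟩

end Polynomial

def RootsDominatedBy (p q : ℝ[X]) : Prop :=
  ∀ x, p.IsRoot x → ∃ y, q.IsRoot y ∧ x ≤ y

namespace RootsDominatedBy

theorem refl (p : ℝ[X]) : RootsDominatedBy p p :=
  fun x hx => ⟨x, hx, le_rfl⟩

theorem trans {p q r : ℝ[X]} (hpq : RootsDominatedBy p q) (hqr : RootsDominatedBy q r) :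
    RootsDominatedBy p r := by
  intro x hx
  obtain ⟨y, hy, hxy⟩ := hpq x hx
  obtain ⟨z, hz, hyz⟩ := hqr y hy
  exact ⟨z, hz, hxy.trans hyz⟩

theorem of_isRoot_of_le {p q : ℝ[X]} {y : ℝ} (hy : q.IsRoot y) (hle : ∀ x, p.IsRoot x → x ≤ y) :
    RootsDominatedBy p q :=
  fun x hx => ⟨y, hy, hle x hx⟩

end RootsDominatedBy

/-- `M` is `β_{n+1}`. For `x ∈ [α_n, β_{n+1}]` every factor `x - β_i` of `f(x)` is `≥ 0` except the
last one, whence the final clause. -/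
theorem Interlaces.exists_largest_root {g f : ℝ[X]} (h : Interlaces g f)
    (hf : 0 < f.leadingCoeff) :
    ∃ M, f.IsRoot M ∧ (∀ x, f.IsRoot x → x ≤ M) ∧ (∀ z, g.IsRoot z → z ≤ M) ∧
      ∀ x ≤ M, (∀ z, g.IsRoot z → z ≤ x) → f.eval x ≤ 0 := by
  obtain ⟨n, a, b, α, β, ha, hb, rfl, rfl, hαβ⟩ := h
  rw [leadingCoeff_C_mul_prod_X_sub_C] at hf
  have hβ : Monotone β := Fin.monotone_iff_le_succ.2 fun i => (hαβ i).1.trans (hαβ i).2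
  have hroot_g : ∀ i, (C a * ∏ i, (X - C (α i))).IsRoot (α i) :=
    fun i => (isRoot_C_mul_prod_X_sub_C_iff ha α).2 ⟨i, rfl⟩
  refine ⟨β (Fin.last n), (isRoot_C_mul_prod_X_sub_C_iff hb β).2 ⟨_, rfl⟩, ?_, ?_, ?_⟩
  · intro x hx
    obtain ⟨i, rfl⟩ := (isRoot_C_mul_prod_X_sub_C_iff hb β).1 hx
    exact hβ (Fin.le_last i)
  · intro z hz
    obtain ⟨i, rfl⟩ := (isRoot_C_mul_prod_X_sub_C_iff ha α).1 hz
    exact (hαβ i).2.trans (hβ (Fin.le_last _))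
  · intro x hxM hgx
    have hprod : 0 ≤ ∏ i : Fin n, (x - β i.castSucc) :=
      prod_nonneg fun i _ => sub_nonneg.2 ((hαβ i).1.trans (hgx _ (hroot_g i)))
    simp only [eval_mul, eval_C, eval_prod, eval_sub, eval_X]
    rw [Fin.prod_univ_castSucc, ← mul_assoc]
    exact mul_nonpos_of_nonneg_of_nonpos (mul_nonneg hf.le hprod) (sub_nonpos.2 hxM)

/-- The polynomial whose largest root `M` is smaller works: the other one is `≤ 0` at `M`. -/
theorem CommonInterlacing.rootsDominatedBy_add {f₀ f₁ : ℝ[X]} (h : CommonInterlacing f₀ f₁)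
    (h₀ : 0 < f₀.leadingCoeff) (h₁ : 0 < f₁.leadingCoeff) :
    RootsDominatedBy f₀ (f₀ + f₁) ∨ RootsDominatedBy f₁ (f₀ + f₁) := by
  obtain ⟨g, hg₀, hg₁⟩ := h
  obtain ⟨M₀, hM₀, hf₀_le, hg_le₀, hf₀_nonpos⟩ := hg₀.exists_largest_root h₀
  obtain ⟨M₁, hM₁, hf₁_le, hg_le₁, hf₁_nonpos⟩ := hg₁.exists_largest_root h₁
  wlog hM : M₀ ≤ M₁ generalizing f₀ f₁ M₀ M₁
  · rw [add_comm, or_comm]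
    exact this h₁ h₀ hg₁ hg₀ M₁ hM₁ hf₁_le hg_le₁ hf₁_nonpos M₀ hM₀ hf₀_le hg_le₀ hf₀_nonpos
      (le_of_not_ge hM)
  have heval : (f₀ + f₁).eval M₀ ≤ 0 := by
    rw [eval_add, hM₀.eq_zero, zero_add]
    exact hf₁_nonpos M₀ hM hg_le₀
  obtain ⟨y, hM₀y, hy⟩ := exists_isRoot_ge_of_eval_nonpos (leadingCoeff_add_pos h₀ h₁) heval
  exact Or.inl (.of_isRoot_of_le hy fun x hx => (hf₀_le x hx).trans hM₀y)

section subFamily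

variable {m : ℕ} (F : Finset (Finset (Fin m)))

theorem subFamily_zero (h : 0 ≤ m) (s : Fin 0 → Bool) : subFamily F h s = F :=
  filter_true_of_mem fun _ _ i => i.elim0

theorem eq_singleton_of_mem_subFamily_self {s : Fin m → Bool} {S : Finset (Fin m)}
    (hS : S ∈ subFamily F le_rfl s) : subFamily F le_rfl s = {S} := by
  refine eq_singleton_iff_unique_mem.2 ⟨hS, fun T hT => ?_⟩
  ext i
  exact ((mem_filter.1 hT).2 i).trans ((mem_filter.1 hS).2 i).symm

theorem subFamily_snoc_false_union_true {k : ℕ} (hk : k < m) (s : Fin k → Bool) :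
    subFamily F hk (Fin.snoc s false) ∪ subFamily F hk (Fin.snoc s true) =
      subFamily F hk.le s := by
  ext S
  simp only [subFamily, mem_union, mem_filter, Fin.forall_fin_succ', Fin.castLE_castSucc,
    Fin.snoc_castSucc, Fin.snoc_last, Bool.false_eq_true, iff_false, iff_true]
  tauto

theorem disjoint_subFamily_snoc_false_true {k : ℕ} (hk : k < m) (s : Fin k → Bool) :
    Disjoint (subFamily F hk (Fin.snoc s false)) (subFamily F hk (Fin.snoc s true)) := by
  rw [disjoint_left]
  intro S h0 h1
  simp only [subFamily, mem_filter, Fin.forall_fin_succ', Fin.snoc_last, Bool.false_eq_true,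
    iff_false, iff_true] at h0 h1
  exact h0.2.2 h1.2.2

variable {F} {f : Finset (Fin m) → ℝ[X]}

theorem InterlacingFamily.exists_snoc_rootsDominatedBy (hfam : InterlacingFamily F f)
    (hlead : ∀ S ∈ F, 0 < (f S).leadingCoeff) {k : ℕ} (hk : k < m) {s : Fin k → Bool}
    (hs : (subFamily F hk.le s).Nonempty) :
    ∃ c, (subFamily F hk (Fin.snoc s c)).Nonempty ∧
      RootsDominatedBy (∑ S ∈ subFamily F hk (Fin.snoc s c), f S)
        (∑ S ∈ subFamily F hk.le s, f S) := by
  have hunion := subFamily_snoc_false_union_true F hk s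
  rcases (subFamily F hk (Fin.snoc s false)).eq_empty_or_nonempty with h₀ | h₀
  · rw [h₀, empty_union] at hunion
    exact ⟨true, hunion ▸ hs, hunion ▸ .refl _⟩
  rcases (subFamily F hk (Fin.snoc s true)).eq_empty_or_nonempty with h₁ | h₁
  · rw [h₁, union_empty] at hunion
    exact ⟨false, hunion ▸ hs, hunion ▸ .refl _⟩
  have hlead_sum : ∀ c, (subFamily F hk (Fin.snoc s c)).Nonempty →
      0 < (∑ S ∈ subFamily F hk (Fin.snoc s c), f S).leadingCoeff :=
    fun c hc => leadingCoeff_sum_pos hc fun S hS => hlead S (mem_of_mem_filter S hS)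
  rw [← hunion, sum_union (disjoint_subFamily_snoc_false_true F hk s)]
  rcases (hfam k hk s h₀ h₁).rootsDominatedBy_add (hlead_sum false h₀) (hlead_sum true h₁)
    with h | h
  · exact ⟨false, h₀, h⟩
  · exact ⟨true, h₁, h⟩

theorem InterlacingFamily.exists_subFamily_rootsDominatedBy (hfam : InterlacingFamily F f)
    (hF : F.Nonempty) (hlead : ∀ S ∈ F, 0 < (f S).leadingCoeff) {k : ℕ} (hk : k ≤ m) :
    ∃ s : Fin k → Bool, (subFamily F hk s).Nonempty ∧
      RootsDominatedBy (∑ S ∈ subFamily F hk s, f S) (∑ S ∈ F, f S) := by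
  induction k with
  | zero => exact ⟨Fin.elim0, by rwa [subFamily_zero], by rw [subFamily_zero]; exact .refl _⟩
  | succ k ih =>
    obtain ⟨s, hs, hdom⟩ := ih (Nat.le_of_succ_le hk)
    obtain ⟨c, hc, hdom'⟩ := hfam.exists_snoc_rootsDominatedBy hlead hk hs
    exact ⟨Fin.snoc s c, hc, hdom'.trans hdom⟩

end subFamily

theorem stmt7_general {m : ℕ} (F : Finset (Finset (Fin m)))
    (hF : F.Nonempty)
    (f : Finset (Fin m) → Polynomial ℝ)
    (hlead : ∀ S ∈ F, 0 < (f S).leadingCoeff)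
    (hfam : InterlacingFamily F f) :
    ∃ S ∈ F, ∀ x : ℝ, (f S).IsRoot x →
      ∃ y : ℝ, (∑ T ∈ F, f T).IsRoot y ∧ x ≤ y := by
  obtain ⟨s, ⟨S, hS⟩, hdom⟩ := hfam.exists_subFamily_rootsDominatedBy hF hlead le_rfl
  rw [eq_singleton_of_mem_subFamily_self F hS, sum_singleton] at hdom
  exact ⟨S, mem_of_mem_filter S hS, hdom⟩

/-- If `{f_S}_{S∈F}` is an interlacing family of real-rooted degree-`d` polynomials with
positive leading coefficients, then some `f_S` has largest root at most the largest root of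
`f_∅ = Σ_{S∈F} f_S`. -/
theorem stmt7 {m d : ℕ} (F : Finset (Finset (Fin m)))
    (hF : F.Nonempty)
    (f : Finset (Fin m) → Polynomial ℝ)
    (hroots : ∀ S ∈ F, RealRooted (f S))
    (hdeg : ∀ S ∈ F, (f S).natDegree = d)
    (hlead : ∀ S ∈ F, 0 < (f S).leadingCoeff)
    (hfam : InterlacingFamily F f) :
    ∃ S ∈ F, ∀ x : ℝ, (f S).IsRoot x →
      ∃ y : ℝ, (∑ T ∈ F, f T).IsRoot y ∧ x ≤ y :=
  stmt7_general F hF f hlead hfam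
end
end

section
/- If p ∈ ℝ[z_1,...,z_m] is real stable, then so is the polynomial (1 − ∂²_{z_1}) p(z_1,...,z_m) = p − ∂²_{z_1} p; that is, p − ∂²_{z_1} p has no root (z_1,...,z_m) ∈ ℂ^m with Im(z_i) > 0 for every i. -/
noncomputable section

/-!
Since `1 - ∂² = (1 - ∂)(1 + ∂)`, it suffices that `1 + c ∂_{z_i}` preserves real stability for
every real `c`. Freezing all variables but `z_i` at points of the upper half-plane reduces this to
one variable. There, if `q` has no zero in the upper half-plane and `Im w > 0`, then
`q(w) + c q'(w) = q(w) (1 + c ∑_r 1 / (w - r))`, the sum running over the roots `r` of `q`;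
every root has `Im r ≤ 0`, so each `1 / (w - r)` lies in the open lower half-plane and the
second factor has nonzero imaginary part unless `c = 0` or `q` is constant.
-/

open Polynomial

lemma Complex.im_sum_one_div_sub_neg {s : Multiset ℂ} (hs : s ≠ 0) {w : ℂ} (hw : 0 < w.im)
    (hs_im : ∀ r ∈ s, r.im ≤ 0) : (s.map fun r => 1 / (w - r)).sum.im < 0 := by
  rw [← Complex.coe_imAddGroupHom, map_multiset_sum, Multiset.map_map]
  refine (Multiset.sum_lt_sum_of_nonempty (g := fun _ => 0) hs fun r hr => ?_).trans_eq (by simp)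
  have h : 0 < (w - r).im := by rw [Complex.sub_im]; linarith [hs_im r hr]
  simp only [Function.comp_apply, Complex.coe_imAddGroupHom, one_div, Complex.inv_im]
  exact div_neg_of_neg_of_pos (neg_neg_of_pos h) (Complex.normSq_pos.2 fun h0 => by simp [h0] at h)

namespace MvPolynomial

variable {R S σ : Type*} [CommSemiring R] [CommSemiring S] [Algebra R S] [DecidableEq σ]

def specializeExcept (i : σ) (z : σ → S) : MvPolynomial σ R →ₐ[R] S[X] :=
  aeval (Function.update (fun j => Polynomial.C (z j)) i Polynomial.X)

theorem eval_specializeExcept (i : σ) (z : σ → S) (w : S) (p : MvPolynomial σ R) :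
    (specializeExcept i z p).eval w = aeval (Function.update z i w) p := by
  rw [← Polynomial.coe_aeval_eq_eval, specializeExcept, ← AlgHom.coe_restrictScalars' R,
    comp_aeval_apply]
  congr 2 with j
  rcases eq_or_ne j i with rfl | hne
  · simp
  · simp [hne]

theorem derivative_specializeExcept (i : σ) (z : σ → S) (p : MvPolynomial σ R) :
    derivative (specializeExcept i z p) = specializeExcept i z (pderiv i p) := by
  induction p using MvPolynomial.induction_on with
  | C a => simp [specializeExcept]
  | add p q hp hq => simp only [map_add, hp, hq]
  | mul_X p j hp =>
    rw [pderiv_mul, map_mul, derivative_mul, hp, map_add, map_mul]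
    rcases eq_or_ne j i with rfl | hne
    · simp [specializeExcept]
    · simp [specializeExcept, hne]

end MvPolynomial

theorem Polynomial.eval_add_C_mul_derivative_ne_zero {q : ℂ[X]}
    (hq : ∀ w : ℂ, 0 < w.im → q.eval w ≠ 0) (c : ℝ) {w : ℂ} (hw : 0 < w.im) :
    (q + C (c : ℂ) * derivative q).eval w ≠ 0 := by
  have hroots : ∀ r ∈ q.roots, r.im ≤ 0 := fun r hr =>
    not_lt.1 fun him => hq r him (mem_roots'.1 hr).2
  set t := (q.roots.map fun r => 1 / (w - r)).sum
  have hfactor : (q + C (c : ℂ) * derivative q).eval w = q.eval w * (1 + c * t) := by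
    rw [eval_add, eval_mul, eval_C,
      (IsAlgClosed.splits q).eval_derivative_eq_eval_mul_sum (hq w hw)]
    ring
  rw [hfactor]
  refine mul_ne_zero (hq w hw) fun h => ?_
  rcases eq_or_ne q.roots 0 with h0 | hne
  · simp [t, h0] at h
  · have him : c * t.im = 0 := by simpa using congrArg Complex.im h
    rcases mul_eq_zero.1 him with rfl | ht
    · simp at h
    · exact (Complex.im_sum_one_div_sub_neg hne hw hroots).ne ht

open MvPolynomial in
theorem RealStable.add_C_mul_pderiv {m : ℕ} {p : MvPolynomial (Fin m) ℝ} (hp : RealStable p)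
    (i : Fin m) (c : ℝ) : RealStable (p + MvPolynomial.C c * pderiv i p) := by
  intro z hz
  have hq : ∀ w : ℂ, 0 < w.im → (specializeExcept i z p).eval w ≠ 0 := by
    intro w hw
    rw [eval_specializeExcept]
    refine hp _ fun j => ?_
    rcases eq_or_ne j i with rfl | hne
    · simpa
    · simpa [hne] using hz j
  have := Polynomial.eval_add_C_mul_derivative_ne_zero hq c (hz i)
  rwa [← Function.update_eq_self i z, ← eval_specializeExcept, map_add, map_mul, algHom_C,
    ← derivative_specializeExcept, Polynomial.algebraMap_apply, Complex.coe_algebraMap]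

/-- If `p` is real stable, then so is `p − ∂²_{z_i} p`. -/
theorem stmt8 {m : ℕ} (p : MvPolynomial (Fin m) ℝ) (hp : RealStable p) (i : Fin m) :
    RealStable (p - MvPolynomial.pderiv i (MvPolynomial.pderiv i p)) := by
  have h := (hp.add_C_mul_pderiv i 1).add_C_mul_pderiv i (-1)
  convert h using 1
  simp only [map_add, map_one, one_mul, map_neg, neg_one_mul]
  ring
end
end

section
/- Let p ∈ ℝ[z_1,...,z_m] be real stable and let z ∈ ℝ^m be above all roots of p. Then for every i ≤ m, Ψ^i_p(z) ≤ (Φ^i_p(z))². -/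
/-!
Restrict `p` to the line through `z` in direction `e_i`: `q(t) = p(z + (t - z_i) e_i)`.
Moving the other coordinates to `z_j + iε` and letting `ε → 0⁺` shows that `q` has no root in
the upper half-plane: for a polynomial without such roots, `y ↦ |f(x + iy)|` is nondecreasing
on `y ≥ 0`, this survives the limit, and a root `w` with `Im w > 0` would then force roots on
the whole vertical segment below `w`. As `q` is real, conjugation excludes the lower half-plane
too, so `q` is real-rooted. Laguerre's expression `L(f) = f'² - f f''` satisfies
`L(fg) = g² L(f) + f² L(g)` and is `1` or `0` on monic linear and constant factors, so
`L(q) ≥ 0`; at `t = z_i`, dividing by `q(z_i)² = p(z)² > 0` gives `Ψ ≤ Φ²`.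
-/

noncomputable section

/-- `z ∈ ℝ^m` is above all roots of `p` if `p(z + t) > 0` for every `t ≥ 0`. -/
def AboveRoots {m : ℕ} (p : MvPolynomial (Fin m) ℝ) (z : Fin m → ℝ) : Prop :=
  ∀ t : Fin m → ℝ, (∀ i, 0 ≤ t i) → 0 < MvPolynomial.eval (z + t) p

/-- The barrier function `Φ^i_p(z) = (∂_{z_i} p)(z) / p(z)`. -/
def Phi {m : ℕ} (p : MvPolynomial (Fin m) ℝ) (i : Fin m) (z : Fin m → ℝ) : ℝ :=
  MvPolynomial.eval z (MvPolynomial.pderiv i p) / MvPolynomial.eval z p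

/-- The second-order barrier function `Ψ^i_p(z) = (∂²_{z_i} p)(z) / p(z)`. -/
def Psi {m : ℕ} (p : MvPolynomial (Fin m) ℝ) (i : Fin m) (z : Fin m → ℝ) : ℝ :=
  MvPolynomial.eval z (MvPolynomial.pderiv i (MvPolynomial.pderiv i p)) /
    MvPolynomial.eval z p

open Polynomial Complex ComplexConjugate Filter Topology Set

theorem Complex.norm_add_mul_I_sub_le {r : ℂ} (hr : r.im ≤ 0) (x : ℝ) {y₁ y₂ : ℝ}
    (h₀ : 0 ≤ y₁) (h₁₂ : y₁ ≤ y₂) :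
    ‖x + y₁ * I - r‖ ≤ ‖x + y₂ * I - r‖ := by
  rw [← sq_le_sq₀ (norm_nonneg _) (norm_nonneg _), Complex.sq_norm, Complex.sq_norm,
    Complex.normSq_apply, Complex.normSq_apply]
  simp only [sub_re, add_re, ofReal_re, mul_re, ofReal_im, I_re, I_im, sub_im, add_im, mul_im]
  nlinarith

namespace Polynomial

def laguerre {R : Type*} [CommRing R] (f : R[X]) : R[X] :=
  derivative f ^ 2 - f * derivative (derivative f)

theorem laguerre_mul {R : Type*} [CommRing R] (f g : R[X]) :
    laguerre (f * g) = g ^ 2 * laguerre f + f ^ 2 * laguerre g := by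
  simp only [laguerre, derivative_mul, derivative_add]
  ring

theorem Splits.eval_laguerre_nonneg {R : Type*} [CommRing R] [LinearOrder R]
    [IsStrictOrderedRing R] {f : R[X]} (hf : f.Splits) (x : R) :
    0 ≤ (laguerre f).eval x := by
  -- `Splits` is membership in the monoid generated by constants and the factors `X + C a`.
  induction hf using Submonoid.closure_induction with
  | mem f hf => obtain ⟨a, rfl⟩ | ⟨a, rfl⟩ := hf <;> simp [laguerre]
  | one => simp [laguerre]
  | mul f g _ _ hf hg =>
    rw [laguerre_mul, eval_add, eval_mul, eval_mul, eval_pow, eval_pow]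
    exact add_nonneg (mul_nonneg (sq_nonneg _) hf) (mul_nonneg (sq_nonneg _) hg)

-- Stability with respect to the upper half-plane, as in the definition of `RealStable`,
-- not Hurwitz stability.
def IsStable (f : ℂ[X]) : Prop :=
  ∀ w : ℂ, 0 < w.im → f.eval w ≠ 0

theorem IsStable.norm_eval_monotoneOn {f : ℂ[X]} (hf : f.IsStable) (x : ℝ) :
    MonotoneOn (fun y : ℝ => ‖f.eval (x + y * I)‖) (Ici 0) := by
  intro y₁ hy₁ y₂ _ hy
  have hroots : ∀ r ∈ f.roots, r.im ≤ 0 := fun r hr =>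
    not_lt.mp fun h => hf r h (isRoot_of_mem_roots hr)
  have norm_prod (s : Multiset ℂ) : ‖s.prod‖ = (s.map (‖·‖)).prod :=
    map_multiset_prod (normHom : ℂ →*₀ ℝ) s
  simp only [(IsAlgClosed.splits f).eval_eq_prod_roots, norm_mul, norm_prod, Multiset.map_map]
  gcongr
  exact Multiset.prod_map_le_prod_map₀ _ _ (fun _ _ => norm_nonneg _)
    fun r hr => norm_add_mul_I_sub_le (hroots r hr) x hy₁ hy

theorem isStable_of_norm_eval_monotoneOn {f : ℂ[X]} (hf : f ≠ 0)
    (hmono : ∀ x : ℝ, MonotoneOn (fun y : ℝ => ‖f.eval (x + y * I)‖) (Ici 0)) :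
    f.IsStable := by
  intro w hw hroot
  have hvanish :
      Ioo 0 w.im ⊆ (fun y : ℝ => (w.re : ℂ) + y * I) ⁻¹' {z | f.IsRoot z} := by
    intro y hy
    have := hmono w.re hy.1.le (mem_Ici.mpr hw.le) hy.2.le
    simpa [re_add_im, hroot] using this
  have hinj : Function.Injective fun y : ℝ => (w.re : ℂ) + y * I := fun a b h => by
    simpa using congrArg im h
  exact hf (eq_zero_of_infinite_isRoot f
    (((Ioo_infinite hw).image hinj.injOn).mono (image_subset_iff.mpr hvanish)))

theorem isStable_of_tendsto {F : ℝ → ℂ[X]} {f : ℂ[X]} {l : Filter ℝ} [l.NeBot]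
    (hF : ∀ᶠ ε in l, (F ε).IsStable)
    (hlim : ∀ w, Tendsto (fun ε => (F ε).eval w) l (𝓝 (f.eval w))) (hf : f ≠ 0) :
    f.IsStable := by
  refine isStable_of_norm_eval_monotoneOn hf fun x y₁ hy₁ y₂ hy₂ hy => ?_
  exact le_of_tendsto_of_tendsto (hlim _).norm (hlim _).norm
    (hF.mono fun ε hε => hε.norm_eval_monotoneOn x hy₁ hy₂ hy)

theorem splits_of_isStable_map {f : ℝ[X]} (hf : (f.map (algebraMap ℝ ℂ)).IsStable) :
    f.Splits := by
  have him_nonpos {r : ℂ} (hr : aeval r f = 0) : r.im ≤ 0 :=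
    not_lt.mp fun h => hf r h (by rwa [eval_map_algebraMap])
  refine (IsAlgClosed.splits _).of_splits_map (algebraMap ℝ ℂ) fun r hr => ⟨r.re, ?_⟩
  have hr : aeval r f = 0 := by rw [← eval_map_algebraMap]; exact isRoot_of_mem_roots hr
  have hr_conj : aeval (conj r) f = 0 := by
    rw [← conjAe_coe, aeval_algHom_apply, hr, map_zero]
  have him : r.im = 0 := le_antisymm (him_nonpos hr) (by simpa using him_nonpos hr_conj)
  exact Complex.ext (by simp) (by simp [him])

end Polynomial

namespace MvPolynomial

variable {R S T σ : Type*} [CommSemiring R] [CommSemiring S] [CommSemiring T] [Algebra R S]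
  [Algebra R T] [DecidableEq σ]

def lineRestrict (i : σ) (v : σ → S) : MvPolynomial σ R →ₐ[R] S[X] :=
  aeval (Function.update (fun j => Polynomial.C (v j)) i Polynomial.X)

theorem eval_lineRestrict (i : σ) (v : σ → S) (w : S) (p : MvPolynomial σ R) :
    (lineRestrict i v p).eval w = aeval (Function.update v i w) p := by
  rw [← Polynomial.coe_aeval_eq_eval]
  change ((Polynomial.aeval w).restrictScalars R |>.comp (lineRestrict i v)) p = _
  congr 1
  refine algHom_ext fun j => ?_
  rcases eq_or_ne j i with rfl | hj <;> simp [lineRestrict, *]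

theorem map_lineRestrict [Algebra S T] [IsScalarTower R S T] (i : σ) (v : σ → S)
    (p : MvPolynomial σ R) :
    (lineRestrict i v p).map (algebraMap S T) = lineRestrict i (algebraMap S T ∘ v) p := by
  change (Polynomial.mapAlgHom (IsScalarTower.toAlgHom R S T) |>.comp (lineRestrict i v)) p = _
  congr 1
  refine algHom_ext fun j => ?_
  rcases eq_or_ne j i with rfl | hj <;> simp [lineRestrict, *]

theorem derivative_lineRestrict (i : σ) (v : σ → S) (p : MvPolynomial σ R) :
    derivative (lineRestrict i v p) = lineRestrict i v (pderiv i p) := by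
  induction p using MvPolynomial.induction_on with
  | C a => simp [lineRestrict]
  | add p q hp hq => simp only [map_add, hp, hq]
  | mul_X p j hp =>
    simp only [lineRestrict] at hp ⊢
    rcases eq_or_ne j i with rfl | hj <;>
      simp [derivative_mul, Derivation.leibniz, pderiv_X, *] <;> ring

end MvPolynomial

theorem RealStable.isStable_map_lineRestrict {m : ℕ} {p : MvPolynomial (Fin m) ℝ}
    (hp : RealStable p) (i : Fin m) (x : Fin m → ℝ)
    (hx : MvPolynomial.lineRestrict i x p ≠ 0) :
    ((MvPolynomial.lineRestrict i x p).map (algebraMap ℝ ℂ)).IsStable := by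
  set v : ℝ → Fin m → ℂ := fun ε j => x j + ε * I
  refine isStable_of_tendsto (F := fun ε => MvPolynomial.lineRestrict i (v ε) p)
    (l := 𝓝[>] 0) ?_ ?_ (Polynomial.map_ne_zero hx)
  · filter_upwards [self_mem_nhdsWithin] with ε hε w hw
    rw [MvPolynomial.eval_lineRestrict]
    refine hp _ fun j => ?_
    rcases eq_or_ne j i with rfl | hj <;> simp [v, hε.out, *]
  · intro w
    have hcont : Continuous fun ε => MvPolynomial.aeval (Function.update (v ε) i w) p := by
      simp only [MvPolynomial.aeval_def, MvPolynomial.eval₂_eq_eval_map]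
      exact (MvPolynomial.continuous_eval _).comp (by fun_prop)
    simp only [MvPolynomial.eval_lineRestrict, MvPolynomial.map_lineRestrict]
    convert (hcont.tendsto 0).mono_left nhdsWithin_le_nhds using 3
    simp [v, Function.comp_def]

/-- If `p` is real stable and `z` is above all roots of `p`, then
`Ψ^i_p(z) ≤ (Φ^i_p(z))²` for every `i`. -/
theorem stmt15 {m : ℕ} (p : MvPolynomial (Fin m) ℝ) (hp : RealStable p)
    (z : Fin m → ℝ) (hz : AboveRoots p z) :
    ∀ i : Fin m, Psi p i z ≤ (Phi p i z) ^ 2 := by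
  intro i
  set q := MvPolynomial.lineRestrict i z p
  have eval_q (r : MvPolynomial (Fin m) ℝ) :
      (MvPolynomial.lineRestrict i z r).eval (z i) = MvPolynomial.eval z r := by
    simp [MvPolynomial.eval_lineRestrict]
  have hpos : 0 < MvPolynomial.eval z p := by simpa using hz 0 fun _ => le_rfl
  have hq : q ≠ 0 := fun h => by simp [← eval_q, q, h] at hpos
  have hq_splits : q.Splits := splits_of_isStable_map (hp.isStable_map_lineRestrict i z hq)
  have hlag := hq_splits.eval_laguerre_nonneg (z i)
  simp only [laguerre, Polynomial.eval_sub, Polynomial.eval_pow, Polynomial.eval_mul, q,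
    MvPolynomial.derivative_lineRestrict, eval_q] at hlag
  rw [Psi, Phi, div_pow, div_le_div_iff₀ hpos (by positivity)]
  nlinarith
end
end

section
/- Let p ∈ ℝ[z_1,...,z_m] be real stable and let z ∈ ℝ^m be above all roots of p with Φ^i_p(z) < 1 for some i ≤ m. Then z is above all roots of the polynomial p − ∂²_{z_i} p, i.e. (p − ∂²_{z_i} p)(z + t) > 0 for every t ∈ ℝ^m with all coordinates ≥ 0. -/
noncomputable section

namespace MvPolynomial

variable {σ R : Type*} [CommSemiring R]

theorem hasDerivAt_aeval_comp {𝕜 K : Type*} [Fintype σ] [NontriviallyNormedField 𝕜]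
    [NormedCommRing K] [NormedAlgebra 𝕜 K] [Algebra R K] {γ : 𝕜 → σ → K} {γ' : σ → K} {s : 𝕜}
    (hγ : ∀ j, HasDerivAt (fun u => γ u j) (γ' j) s) (p : MvPolynomial σ R) :
    HasDerivAt (fun u => aeval (γ u) p) (∑ j, γ' j * aeval (γ s) (pderiv j p)) s := by
  classical
  induction p using MvPolynomial.induction_on with
  | C a => simpa using hasDerivAt_const s (algebraMap R K a)
  | add p q hp hq =>
    simp only [map_add, mul_add, Finset.sum_add_distrib]
    exact hp.add hq
  | mul_X p j hp =>
    simp only [map_mul, aeval_X]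
    refine (hp.mul (hγ j)).congr_deriv ?_
    simp only [Derivation.leibniz, pderiv_X, Pi.single_apply, smul_eq_mul, mul_ite, mul_one,
      mul_zero, map_add, map_mul, aeval_X, apply_ite (aeval (γ s)), map_zero, mul_add,
      Finset.sum_add_distrib, Finset.sum_ite_eq, Finset.mem_univ, if_true, Finset.sum_mul]
    rw [add_comm]
    congr 1
    · ring
    · exact Finset.sum_congr rfl fun _ _ => by ring

variable {K : Type*} [CommSemiring K] [Algebra R K] [DecidableEq σ]

/-- The univariate polynomial `u ↦ p (x + u • e_i)`. -/
def restrictVar (x : σ → K) (i : σ) (p : MvPolynomial σ R) : Polynomial K :=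
  aeval (fun j => Polynomial.C (x j) + Pi.single (M := fun _ => Polynomial K) i Polynomial.X j) p

theorem eval_restrictVar (x : σ → K) (i : σ) (p : MvPolynomial σ R) (u : K) :
    (restrictVar x i p).eval u = aeval (x + Pi.single i u) p := by
  induction p using MvPolynomial.induction_on with
  | C a => simp [restrictVar, Polynomial.algebraMap_apply]
  | add p q hp hq => simp_all [restrictVar]
  | mul_X p j hp =>
    simp_all only [restrictVar, map_mul, aeval_X, Polynomial.eval_mul]
    rcases eq_or_ne j i with rfl | h <;> simp [*]

theorem derivative_restrictVar (x : σ → K) (i : σ) (p : MvPolynomial σ R) :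
    (restrictVar x i p).derivative = restrictVar x i (pderiv i p) := by
  induction p using MvPolynomial.induction_on with
  | C a => simp [restrictVar, Polynomial.algebraMap_apply]
  | add p q hp hq => simp_all [restrictVar]
  | mul_X p j hp =>
    simp_all only [restrictVar, map_mul, aeval_X, Polynomial.derivative_mul, Derivation.leibniz,
      pderiv_X, map_add, smul_eq_mul]
    rcases eq_or_ne j i with rfl | h <;> simp [*, mul_comm, add_comm]

end MvPolynomial

namespace Polynomial

open scoped Polynomial

theorem im_eval_derivative_div_eval_nonpos {P : ℂ[X]} {c : ℝ}
    (hP : ∀ x : ℂ, c < x.im → P.eval x ≠ 0) {x : ℂ} (hx : c < x.im) :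
    (P.derivative.eval x / P.eval x).im ≤ 0 := by
  rw [(IsAlgClosed.splits P).eval_derivative_div_eval_of_ne_zero (hP x hx)]
  change Complex.imAddGroupHom _ ≤ 0
  rw [map_multiset_sum, Multiset.map_map]
  refine (Multiset.sum_le_card_nsmul _ 0 fun y hy => ?_).trans_eq (nsmul_zero _)
  obtain ⟨z, hz, rfl⟩ := Multiset.mem_map.mp hy
  have hzc : z.im ≤ c := by
    by_contra! h
    exact hP z h (mem_roots'.mp hz).2
  simp only [Function.comp_apply, Complex.coe_imAddGroupHom, one_div, Complex.inv_im,
    Complex.sub_im]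
  exact div_nonpos_of_nonpos_of_nonneg (by linarith) (Complex.normSq_nonneg _)

theorem eval_derivative_nonneg_of_div_le {P : ℝ[X]} (hpos : ∀ s, 0 ≤ s → 0 < P.eval s)
    (hle : ∀ s, 0 ≤ s → P.derivative.eval s / P.eval s ≤ P.derivative.eval 0 / P.eval 0) :
    0 ≤ P.derivative.eval 0 := by
  by_contra! hneg
  have hderiv : ∀ s, 0 ≤ s → P.derivative.eval s ≤ 0 := fun s hs => by
    have h := (hle s hs).trans_lt (div_neg_of_neg_of_pos hneg (hpos 0 le_rfl))
    exact ((div_neg_iff.mp h).resolve_left fun h' => (hpos s hs).not_gt h'.2).1.le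
  have hanti : AntitoneOn (fun s => P.eval s) (Set.Ici 0) := by
    refine antitoneOn_of_deriv_nonpos (convex_Ici 0) P.continuousOn P.differentiableOn ?_
    simp only [interior_Ici, Set.mem_Ioi, Polynomial.deriv]
    exact fun s hs => hderiv s hs.le
  rcases le_or_gt P.degree 0 with hdeg | hdeg
  · rw [eq_C_of_degree_le_zero hdeg] at hneg
    simp at hneg
  · obtain ⟨s, hs, hs0⟩ := (((P.abs_tendsto_atTop hdeg).eventually_gt_atTop (P.eval 0)).and
      (Filter.eventually_ge_atTop 0)).exists
    rw [abs_of_pos (hpos s hs0)] at hs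
    exact (hanti Set.self_mem_Ici hs0 hs0).not_gt hs

end Polynomial

theorem HasDerivAt.nonpos_of_forall_gt_le {f : ℝ → ℝ} {f' a : ℝ} (hf : HasDerivAt f f' a)
    (h : ∀ x, a < x → f x ≤ f a) : f' ≤ 0 := by
  have hmax : IsLocalMaxOn f (Set.Ici a) a := Filter.eventually_of_mem self_mem_nhdsWithin
    fun x (hx : a ≤ x) => hx.eq_or_lt.elim (fun hxa => hxa ▸ le_rfl) (h x)
  have h1 : (1 : ℝ) ∈ posTangentConeAt (Set.Ici a) a :=
    one_mem_posTangentConeAt_iff_frequently.2 ((eventually_mem_nhdsWithin (s := Set.Ioi a)).mono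
      fun _ hx => Set.mem_Ici.2 (le_of_lt hx)).frequently
  simpa using hmax.hasFDerivWithinAt_nonpos hf.hasDerivWithinAt.hasFDerivWithinAt h1

open MvPolynomial

variable {m : ℕ} {p : MvPolynomial (Fin m) ℝ} {z t : Fin m → ℝ}

theorem RealStable.im_barrier_nonpos (hp : RealStable p) (i : Fin m) {x : Fin m → ℂ}
    (hx : ∀ j, 0 < (x j).im) : (aeval x (pderiv i p) / aeval x p).im ≤ 0 := by
  have hline : ∀ u : ℂ, -(x i).im < u.im → ∀ j, 0 < ((x + Pi.single i u : Fin m → ℂ) j).im := by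
    intro u hu j
    rcases eq_or_ne j i with rfl | h
    · simp only [Pi.add_apply, Pi.single_eq_same, Complex.add_im]
      linarith
    · simpa [h] using hx j
  have h := Polynomial.im_eval_derivative_div_eval_nonpos (P := restrictVar x i p)
    (fun u hu => by rw [eval_restrictVar]; exact hp _ (hline u hu)) (x := 0) (by simpa using hx i)
  simpa [derivative_restrictVar, eval_restrictVar] using h

theorem RealStable.sum_pderiv_pderiv_mul_le (hp : RealStable p) (i : Fin m) {x u : Fin m → ℝ}
    (hx : eval x p ≠ 0) (hu : 0 ≤ u) :
    (∑ j, u j * eval x (pderiv j (pderiv i p))) * eval x p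
      ≤ eval x (pderiv i p) * ∑ j, u j * eval x (pderiv j p) := by
  -- The `δ ^ 2` keeps the coordinates with `u j = 0` in the open upper half-plane for `δ > 0`.
  set γ : ℝ → Fin m → ℂ := fun δ j => x j + ((δ * u j + δ ^ 2 : ℝ) : ℂ) * Complex.I
  have hγ : ∀ j, HasDerivAt (fun δ => γ δ j) ((u j : ℂ) * Complex.I) 0 := fun j => by
    simpa [γ] using ((((hasDerivAt_id (0 : ℝ)).mul_const (u j)).add (hasDerivAt_pow 2 (0 : ℝ))
      ).ofReal_comp.mul_const Complex.I).const_add (x j : ℂ)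
  have hγ0 : ∀ q : MvPolynomial (Fin m) ℝ, aeval (γ 0) q = (eval x q : ℂ) := fun q => by
    simpa [γ, Function.comp_def] using aeval_algebraMap_apply (B := ℂ) x q
  have hD : ∀ q : MvPolynomial (Fin m) ℝ, HasDerivAt (fun δ => aeval (γ δ) q)
      (Complex.I * ((∑ j, u j * eval x (pderiv j q) : ℝ) : ℂ)) 0 := fun q => by
    refine (hasDerivAt_aeval_comp hγ q).congr_deriv ?_
    simp only [hγ0, Complex.ofReal_sum, Complex.ofReal_mul, Finset.mul_sum]
    exact Finset.sum_congr rfl fun _ _ => by ring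
  have hF := (hD (pderiv i p)).div (hD p) (by rw [hγ0]; exact_mod_cast hx)
  set a := eval x (pderiv i p)
  set b := eval x p
  set r := ∑ j, u j * eval x (pderiv j (pderiv i p))
  set s := ∑ j, u j * eval x (pderiv j p)
  have hderiv : (Complex.I * r * aeval (γ 0) p - aeval (γ 0) (pderiv i p) * (Complex.I * s)) /
      aeval (γ 0) p ^ 2 = (((r * b - a * s) / b ^ 2 : ℝ) : ℂ) * Complex.I := by
    rw [hγ0, hγ0]
    push_cast
    ring
  rw [hderiv] at hF
  have hIm := (Complex.imCLM.hasFDerivAt.comp_hasDerivAt _ hF).nonpos_of_forall_gt_le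
    fun δ hδ => ?_
  · simp only [Complex.imCLM_apply, Complex.mul_I_im, Complex.ofReal_re] at hIm
    have hb : 0 < b ^ 2 := by positivity
    linarith [(div_le_iff₀ hb).mp hIm]
  · simp only [Function.comp_apply, Complex.imCLM_apply, Pi.div_apply, hγ0]
    rw [← Complex.ofReal_div, Complex.ofReal_im]
    refine hp.im_barrier_nonpos i fun j => ?_
    simp only [γ, Complex.add_im, Complex.ofReal_im, Complex.mul_I_im, Complex.ofReal_re, zero_add]
    exact add_pos_of_nonneg_of_pos (mul_nonneg hδ.le (hu j)) (pow_pos hδ 2)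

theorem AboveRoots.add (hz : AboveRoots p z) (ht : 0 ≤ t) : AboveRoots p (z + t) :=
  fun t' ht' => by
    rw [add_assoc]
    exact hz _ fun j => add_nonneg (ht j) (ht' j)

theorem RealStable.phi_add_le (hp : RealStable p) (i : Fin m) (hz : AboveRoots p z)
    (ht : 0 ≤ t) : Phi p i (z + t) ≤ Phi p i z := by
  have hpos : ∀ s : ℝ, 0 ≤ s → eval (z + s • t) p ≠ 0 :=
    fun s hs => (hz _ (smul_nonneg hs ht)).ne'
  have hline : ∀ q (s : ℝ), HasDerivAt (fun s => eval (z + s • t) q)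
      (∑ j, t j * eval (z + s • t) (pderiv j q)) s := fun q s => by
    have hγ : ∀ j, HasDerivAt (fun s : ℝ => (z + s • t) j) (t j) s := fun j => by
      simpa using ((hasDerivAt_id s).mul_const (t j)).const_add (z j)
    exact hasDerivAt_aeval_comp hγ q
  let dΦ : ℝ → ℝ := fun s =>
    ((∑ j, t j * eval (z + s • t) (pderiv j (pderiv i p))) * eval (z + s • t) p
      - eval (z + s • t) (pderiv i p) * ∑ j, t j * eval (z + s • t) (pderiv j p))
      / eval (z + s • t) p ^ 2
  have hderiv : ∀ s : ℝ, 0 ≤ s → HasDerivAt (fun s => Phi p i (z + s • t)) (dΦ s) s :=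
    fun s hs => (hline _ s).div (hline p s) (hpos s hs)
  have hanti : AntitoneOn (fun s : ℝ => Phi p i (z + s • t)) (Set.Ici 0) := by
    refine antitoneOn_of_hasDerivWithinAt_nonpos (f' := dΦ) (convex_Ici 0)
      (fun s hs => (hderiv s hs).continuousAt.continuousWithinAt) (fun s hs => ?_) fun s hs => ?_
    · rw [interior_Ici] at hs
      exact (hderiv s (le_of_lt hs)).hasDerivWithinAt
    · rw [interior_Ici] at hs
      exact div_nonpos_of_nonpos_of_nonneg
        (sub_nonpos.2 (hp.sum_pderiv_pderiv_mul_le i (hpos s (le_of_lt hs)) ht)) (sq_nonneg _)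
  simpa using hanti Set.self_mem_Ici (Set.mem_Ici.2 zero_le_one) zero_le_one

theorem RealStable.pderiv_nonneg (hp : RealStable p) (i : Fin m) (hz : AboveRoots p z) :
    0 ≤ eval z (pderiv i p) := by
  have hsingle : ∀ s : ℝ, 0 ≤ s → 0 ≤ (Pi.single i s : Fin m → ℝ) := fun _ hs => by simpa using hs
  have h := Polynomial.eval_derivative_nonneg_of_div_le (P := restrictVar z i p)
    (fun s hs => by
      rw [eval_restrictVar]
      exact hz _ (hsingle s hs))
    fun s hs => by
      simpa only [Phi, derivative_restrictVar, eval_restrictVar, aeval_eq_eval,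
        Pi.single_zero, add_zero] using hp.phi_add_le i hz (hsingle s hs)
  simpa only [derivative_restrictVar, eval_restrictVar, aeval_eq_eval, Pi.single_zero,
    add_zero] using h

theorem RealStable.eval_mul_pderiv_pderiv_le_sq (hp : RealStable p) (i : Fin m)
    (hz : eval z p ≠ 0) : eval z p * eval z (pderiv i (pderiv i p)) ≤ eval z (pderiv i p) ^ 2 := by
  simpa [Pi.single_apply, mul_comm, sq] using
    hp.sum_pderiv_pderiv_mul_le i hz (Pi.single_nonneg.2 zero_le_one : 0 ≤ Pi.single i (1 : ℝ))

/-- If `p` is real stable, `z` is above all roots of `p`, and `Φ^i_p(z) < 1`, then `z` is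
above all roots of `p − ∂²_{z_i} p`. -/
theorem stmt16 {m : ℕ} (p : MvPolynomial (Fin m) ℝ) (hp : RealStable p)
    (z : Fin m → ℝ) (hz : AboveRoots p z) (i : Fin m) (hΦ : Phi p i z < 1) :
    AboveRoots (p - MvPolynomial.pderiv i (MvPolynomial.pderiv i p)) z := by
  intro t ht
  have hw : AboveRoots p (z + t) := hz.add ht
  have hpos : 0 < eval (z + t) p := by simpa using hw 0 fun _ => le_rfl
  have hlt : eval (z + t) (pderiv i p) < eval (z + t) p := by
    rw [← div_lt_one hpos]
    exact (hp.phi_add_le i hz ht).trans_lt hΦ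
  have hnonneg := hp.pderiv_nonneg i hw
  have hsq := hp.eval_mul_pderiv_pderiv_le_sq i hpos.ne'
  rw [map_sub, sub_pos]
  nlinarith

end
end
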